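/- arXiv:2411.16054 — 4 statements merged into one kernel-verified Lean document; each statement's English description precedes it below -/
import Mathlib

section
/- Let F be a non-archimedean local field with residue field of size q, let n be a prime number, and let F'/F be a totally ramified extension of degree n. Let α ∈ O_{F'} with v_{F'}(α) = d, where v_{F'} is the normalized valuation of F' with v_{F'}(uniformizer) = 1, and suppose n does not divide d. Then the o_F-module length of O_{F'} / o_F[α] equals (d−1)(n−1)/2. -/
/-!
Let `v` be the normalized valuation of `B`. Since `m_A B = m_B ^ n`, valuations of elements of `A`
are multiples of `n`, and counting `B ⧸ m_A B` in two ways shows that the residue fields of `A` and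
`B` coincide. In `M = ∑_{i<n} A αⁱ` the terms `c αⁱ` of an element have valuations in distinct
classes modulo `n`, so the valuations attained on `M` form exactly the numerical semigroup `⟨n, d⟩`.
Filtering `B ⧸ M` by the images of `m_B ^ j`, the `j`-th graded piece has `q` elements when `j` is a
gap of `⟨n, d⟩` and is trivial otherwise. There are no gaps from the conductor `(n-1)(d-1)` on, so
Krull's intersection theorem gives `m_B ^ ((n-1)(d-1)) ⊆ M`, whence `M = A[α]`. Finally
`j ↦ (n-1)(d-1) - 1 - j` exchanges gaps and non-gaps below the conductor, so there are
`(n-1)(d-1)/2` gaps.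
-/

open IsLocalRing Finset
open IsDiscreteValuationRing (addVal)

namespace Nat

variable {n d j : ℕ}

lemma eq_of_mul_add_mul_eq {a a' i i' : ℕ} (hco : n.Coprime d) (hi : i < n)
    (hi' : i' < n) (h : a * n + i * d = a' * n + i' * d) : i = i' := by
  have hmod : i * d ≡ i' * d [MOD n] := by
    simpa [ModEq, add_mul_mod_self_right] using congrArg (· % n) h
  exact (ModEq.cancel_right_of_coprime hco hmod).eq_of_lt_of_lt hi hi'

lemma exists_eq_mul_add_mul_of_coprime (hco : n.Coprime d) (hn : 0 < n) (j : ℕ) :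
    ∃ a : ℤ, ∃ b < n, (j : ℤ) = a * n + b * d := by
  have hbez : (1 : ℤ) = n * n.gcdA d + d * n.gcdB d := by
    simpa [hco.gcd_eq_one] using gcd_eq_gcd_ab n d
  set t : ℤ := j * n.gcdB d
  refine ⟨j * n.gcdA d + t / n * d, (t % n).toNat, ?_, ?_⟩
  · have := Int.emod_lt_of_pos t (by exact_mod_cast hn : (0 : ℤ) < n)
    omega
  · rw [Int.toNat_of_nonneg (Int.emod_nonneg t (by omega))]
    linear_combination (j : ℤ) * hbez - d * Int.emod_add_mul_ediv t n

lemma mem_closure_pair_iff_exists_lt (hn : 0 < n) :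
    j ∈ AddSubmonoid.closure ({n, d} : Set ℕ) ↔ ∃ a, ∃ b < n, j = a * n + b * d := by
  rw [AddSubmonoid.mem_closure_pair]
  constructor
  · rintro ⟨a, b, rfl⟩
    refine ⟨a + b / n * d, b % n, mod_lt b hn, ?_⟩
    simp only [smul_eq_mul]
    nth_rw 1 [← mod_add_div b n]
    ring
  · rintro ⟨a, b, -, rfl⟩
    exact ⟨a, b, by simp [smul_eq_mul]⟩

lemma mem_closure_pair_of_le (hco : n.Coprime d) (hn : 0 < n) (hd : 0 < d)
    (hj : (n - 1) * (d - 1) ≤ j) : j ∈ AddSubmonoid.closure ({n, d} : Set ℕ) := by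
  rcases lt_or_ge 1 n with hn1 | hn1
  · rcases lt_or_ge 1 d with hd1 | hd1
    · refine (frobeniusNumber_iff.mp (frobeniusNumber_pair hco hn1 hd1)).2 j ?_
      obtain ⟨n, rfl⟩ := Nat.exists_eq_add_of_lt hn1
      obtain ⟨d, rfl⟩ := Nat.exists_eq_add_of_lt hd1
      simp only [Nat.add_sub_cancel] at hj
      ring_nf at hj ⊢
      omega
    · obtain rfl : d = 1 := by omega
      exact (AddSubmonoid.mem_closure_pair ..).mpr ⟨0, j, by simp⟩
  · obtain rfl : n = 1 := by omega
    exact (AddSubmonoid.mem_closure_pair ..).mpr ⟨j, 0, by simp⟩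

lemma notMem_closure_pair_iff (hco : n.Coprime d) (hn : 1 < n) (hd : 1 < d)
    (hj : j ≤ n * d - n - d) :
    j ∉ AddSubmonoid.closure ({n, d} : Set ℕ) ↔
      n * d - n - d - j ∈ AddSubmonoid.closure ({n, d} : Set ℕ) := by
  have hnd : n + d ≤ n * d := add_le_mul hn hd
  constructor
  · intro hjS
    obtain ⟨a, b, hb, hab⟩ := exists_eq_mul_add_mul_of_coprime hco (by omega) j
    have ha : a < 0 := by
      by_contra! ha
      refine hjS ((mem_closure_pair_iff_exists_lt (by omega)).mpr ⟨a.toNat, b, hb, ?_⟩)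
      zify
      rw [Int.toNat_of_nonneg ha]
      exact hab
    refine (AddSubmonoid.mem_closure_pair ..).mpr ⟨(-a - 1).toNat, n - 1 - b, ?_⟩
    have hF : ((n * d - n - d - j : ℕ) : ℤ) = n * d - n - d - j := by omega
    rw [smul_eq_mul, smul_eq_mul, ← Nat.cast_inj (R := ℤ), hF]
    push_cast [Int.toNat_of_nonneg (by omega : 0 ≤ -a - 1), Nat.cast_sub (by omega : b ≤ n - 1),
      Nat.cast_sub (by omega : 1 ≤ n)]
    linear_combination hab
  · intro hF hjS
    refine (frobeniusNumber_iff.mp (frobeniusNumber_pair hco hn hd)).1 ?_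
    simpa [Nat.add_sub_cancel' hj] using add_mem hjS hF

open scoped Classical in
lemma card_filter_notMem_closure_pair (hco : n.Coprime d) :
    #{j ∈ range ((n - 1) * (d - 1)) | j ∉ AddSubmonoid.closure ({n, d} : Set ℕ)} =
      (n - 1) * (d - 1) / 2 := by
  set S := AddSubmonoid.closure ({n, d} : Set ℕ)
  rcases lt_or_ge 1 n with hn | hn
  swap
  · simp [show n - 1 = 0 by omega]
  rcases lt_or_ge 1 d with hd | hd
  swap
  · simp [show d - 1 = 0 by omega]
  set c := (n - 1) * (d - 1)
  have hc : c = n * d - n - d + 1 := by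
    obtain ⟨n, rfl⟩ := Nat.exists_eq_add_of_lt hn
    obtain ⟨d, rfl⟩ := Nat.exists_eq_add_of_lt hd
    simp only [c, Nat.add_sub_cancel]
    ring_nf
    omega
  have hgaps : #{j ∈ range c | j ∉ S} = #{j ∈ range c | j ∈ S} := by
    refine card_nbij' (fun j ↦ c - 1 - j) (fun j ↦ c - 1 - j) ?_ ?_ ?_ ?_ <;>
      intro j hj <;> simp only [coe_filter, mem_range, Set.mem_ofPred_eq] at hj ⊢
    · refine ⟨by omega, ?_⟩
      rw [show c - 1 - j = n * d - n - d - j by omega]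
      exact (notMem_closure_pair_iff hco hn hd (by omega)).mp hj.2
    · refine ⟨by omega, (notMem_closure_pair_iff hco hn hd (by omega)).mpr ?_⟩
      rw [show n * d - n - d - (c - 1 - j) = j by omega]
      exact hj.2
    · omega
    · omega
  have := card_filter_add_card_filter_not (s := range c) (· ∈ S)
  simp only [card_range] at this
  omega

end Nat

lemma Submodule.iInf_sup_pow_smul_top_eq {A N : Type*} [CommRing A] [IsNoetherianRing A]
    [IsLocalRing A] [AddCommGroup N] [Module A N] [Module.Finite A N] (M : Submodule A N)
    {I : Ideal A} (hI : I ≠ ⊤) : ⨅ k : ℕ, (M ⊔ I ^ k • ⊤) = M := by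
  refine le_antisymm (fun x hx ↦ ?_) (le_iInf fun _ ↦ le_sup_left)
  have hkrull := (I.iInf_pow_smul_eq_bot_of_isLocalRing (M := N ⧸ M) hI).le
  rw [← Submodule.Quotient.mk_eq_zero, ← Submodule.mem_bot A]
  refine hkrull (Submodule.mem_iInf _ |>.mpr fun k ↦ ?_)
  have := Submodule.mem_map_of_mem (f := M.mkQ) ((Submodule.mem_iInf _).mp hx k)
  rwa [Submodule.map_sup, Submodule.mkQ_map_self, bot_sup_eq, Submodule.map_smul'',
    Submodule.map_top, Submodule.range_mkQ] at this

lemma Module.natCard_quotient_maximalIdeal_smul_top {A M : Type*} [CommRing A] [IsLocalRing A]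
    [AddCommGroup M] [Module A M] [Module.Free A M] [Module.Finite A M] :
    Nat.card (M ⧸ (maximalIdeal A • ⊤ : Submodule A M)) =
      Nat.card (ResidueField A) ^ Module.finrank A M := by
  let _ : Field (A ⧸ maximalIdeal A) := Ideal.Quotient.field _
  rw [← Nat.card_congr (TensorProduct.quotTensorEquivQuotSMul M (maximalIdeal A)).toEquiv,
    Module.natCard_eq_pow_finrank (K := A ⧸ maximalIdeal A), Module.finrank_baseChange]
  rfl

lemma Algebra.toSubmodule_adjoin_singleton_eq_span_pow {A B : Type*} [CommRing A] [CommRing B]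
    [Algebra A B] {α : B} {n : ℕ}
    (hα : ∀ k, n ≤ k → α ^ k ∈ Submodule.span A (Set.range fun i : Fin n ↦ α ^ (i : ℕ))) :
    Subalgebra.toSubmodule (Algebra.adjoin A {α}) =
      Submodule.span A (Set.range fun i : Fin n ↦ α ^ (i : ℕ)) := by
  refine le_antisymm ?_ (Submodule.span_le.mpr ?_)
  · rw [Algebra.adjoin_eq_span, Submodule.span_le]
    rintro _ hx
    obtain ⟨k, rfl⟩ := Submonoid.mem_closure_singleton.mp hx
    rcases lt_or_ge k n with hk | hk
    · exact Submodule.subset_span ⟨⟨k, hk⟩, rfl⟩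
    · exact hα k hk
  · rintro _ ⟨i, rfl⟩
    exact pow_mem (Algebra.self_mem_adjoin_singleton A α) _

section DVR

variable {B : Type*} [CommRing B] [IsDomain B] [IsDiscreteValuationRing B]

lemma mem_maximalIdeal_pow_iff_le_addVal {x : B} {j : ℕ} :
    x ∈ maximalIdeal B ^ j ↔ (j : ℕ∞) ≤ addVal B x := by
  obtain ⟨ϖ, hϖ⟩ := IsDiscreteValuationRing.exists_irreducible B
  rw [hϖ.maximalIdeal_eq, Ideal.span_singleton_pow, Ideal.mem_span_singleton,
    ← IsDiscreteValuationRing.addVal_le_iff_dvd, hϖ.addVal_pow]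

lemma addVal_eq_of_mem_of_notMem {x : B} {j : ℕ} (hj : x ∈ maximalIdeal B ^ j)
    (hj' : x ∉ maximalIdeal B ^ (j + 1)) : addVal B x = j := by
  rw [mem_maximalIdeal_pow_iff_le_addVal] at hj hj'
  push_cast at hj'
  exact le_antisymm ((ENat.lt_add_one_iff (ENat.natCast_ne_top j)).mp (not_le.mp hj')) hj

lemma relIndex_maximalIdeal_pow_succ (j : ℕ) :
    (maximalIdeal B ^ (j + 1)).toAddSubgroup.relIndex (maximalIdeal B ^ j).toAddSubgroup =
      Nat.card (ResidueField B) := by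
  have hsmul : (maximalIdeal B • ⊤ : Submodule B ↥(maximalIdeal B ^ j)).toAddSubgroup =
      (maximalIdeal B ^ (j + 1)).toAddSubgroup.addSubgroupOf
        (maximalIdeal B ^ j).toAddSubgroup := by
    ext x
    simp only [Submodule.mem_toAddSubgroup, Submodule.mem_smul_top_iff, smul_eq_mul, pow_succ']
    exact Iff.rfl
  exact (Nat.card_congr ((Ideal.quotEquivPowQuotPowSuccEquiv
    (IsPrincipalIdealRing.principal _) (IsDiscreteValuationRing.not_a_field B) j).trans
    (QuotientAddGroup.quotientAddEquivOfEq hsmul).toEquiv)).symm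

end DVR

section Extension

variable {A B : Type*} [CommRing A] [CommRing B] [IsDomain B] [IsDiscreteValuationRing B]
  [Algebra A B] {e : ℕ}

lemma addVal_algebraMap [IsDomain A] [IsDiscreteValuationRing A]
    (he : Ideal.map (algebraMap A B) (maximalIdeal A) = maximalIdeal B ^ e) (he0 : e ≠ 0)
    (a : A) : addVal B (algebraMap A B a) = e • addVal A a := by
  obtain ⟨π, hπ⟩ := IsDiscreteValuationRing.exists_irreducible A
  obtain ⟨ϖ, hϖ⟩ := IsDiscreteValuationRing.exists_irreducible B
  have hval_π : addVal B (algebraMap A B π) = e := by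
    have hspan : Ideal.span {algebraMap A B π} = Ideal.span {ϖ ^ e} := by
      rw [← Ideal.span_singleton_pow, ← hϖ.maximalIdeal_eq, ← he, hπ.maximalIdeal_eq,
        Ideal.map_span, Set.image_singleton]
    rw [(IsDiscreteValuationRing.addVal_eq_iff_associated _ _).mpr
      (Ideal.span_singleton_eq_span_singleton.mp hspan), hϖ.addVal_pow]
  rcases eq_or_ne a 0 with rfl | ha
  · simp [nsmul_eq_mul, ENat.mul_top (Nat.cast_ne_zero.mpr he0)]
  obtain ⟨k, u, rfl⟩ := IsDiscreteValuationRing.eq_unit_mul_pow_irreducible ha hπ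
  simp [hval_π, hπ.addVal_pow,
    IsDiscreteValuationRing.addVal_eq_zero_iff.mpr (u.isUnit.map (algebraMap A B)), mul_comm]

lemma natCard_residueField_eq [IsLocalRing A] [Module.Free A B] [Module.Finite A B]
    (he : Ideal.map (algebraMap A B) (maximalIdeal A) = maximalIdeal B ^ e) (he0 : e ≠ 0)
    (hrank : Module.finrank A B = e) :
    Nat.card (ResidueField B) = Nat.card (ResidueField A) := by
  have hB : Nat.card (B ⧸ maximalIdeal B ^ e) = Nat.card (ResidueField B) ^ e := by
    rw [← Submodule.cardQuot_apply, cardQuot_pow_of_prime (IsDiscreteValuationRing.not_a_field B),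
      Submodule.cardQuot_apply]
    rfl
  have hA : Nat.card (B ⧸ maximalIdeal B ^ e) = Nat.card (ResidueField A) ^ Module.finrank A B := by
    rw [← Module.natCard_quotient_maximalIdeal_smul_top, Ideal.smul_top_eq_map, he]
    exact Nat.card_congr (Submodule.Quotient.restrictScalarsEquiv A _).toEquiv.symm
  exact Nat.pow_left_injective he0 (hB.symm.trans (hrank ▸ hA))

lemma residue_comp_algebraMap_surjective [IsLocalRing A] [Finite (ResidueField A)]
    (he : Ideal.map (algebraMap A B) (maximalIdeal A) = maximalIdeal B ^ e) (he0 : e ≠ 0)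
    (hcard : Nat.card (ResidueField B) = Nat.card (ResidueField A)) :
    Function.Surjective ((residue B).comp (algebraMap A B)) := by
  have : IsLocalHom (algebraMap A B) :=
    ((local_hom_TFAE (algebraMap A B)).out 0 2).mpr (he ▸ Ideal.pow_le_self he0)
  have : Finite (ResidueField B) := Nat.finite_of_card_ne_zero (hcard ▸ Nat.card_pos.ne')
  have hbij := (ResidueField.map (algebraMap A B)).injective.bijective_of_nat_card_le hcard.le
  intro r
  obtain ⟨r', hr⟩ := hbij.2 r
  obtain ⟨a, rfl⟩ := residue_surjective r'
  exact ⟨a, by rw [RingHom.comp_apply, ← ResidueField.map_residue, hr]⟩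

end Extension

section Filtration

variable {A B : Type*} [CommRing A] [CommRing B] [IsDomain B] [IsDiscreteValuationRing B]
  [Algebra A B]

def addValSet (M : Submodule A B) : Set ℕ := {j | ∃ x ∈ M, addVal B x = j}

def supMaximalIdealPow (M : Submodule A B) (j : ℕ) : Submodule A B :=
  M ⊔ (maximalIdeal B ^ j).restrictScalars A

variable {M : Submodule A B} {j : ℕ}

lemma supMaximalIdealPow_succ_le (M : Submodule A B) (j : ℕ) :
    supMaximalIdealPow M (j + 1) ≤ supMaximalIdealPow M j :=
  sup_le_sup_left (Submodule.restrictScalars_mono A (Ideal.pow_le_pow_right j.le_succ)) _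

lemma supMaximalIdealPow_succ_eq_of_mem
    (hres : Function.Surjective ((residue B).comp (algebraMap A B))) (hj : j ∈ addValSet M) :
    supMaximalIdealPow M (j + 1) = supMaximalIdealPow M j := by
  obtain ⟨z, hzM, hz⟩ := hj
  have hzj : z ∈ maximalIdeal B ^ j := mem_maximalIdeal_pow_iff_le_addVal.mpr hz.ge
  refine le_antisymm (supMaximalIdealPow_succ_le M j) (sup_le le_sup_left fun y hy ↦ ?_)
  obtain ⟨b, rfl⟩ : z ∣ y := IsDiscreteValuationRing.addVal_le_iff_dvd.mp
    (hz ▸ mem_maximalIdeal_pow_iff_le_addVal.mp hy)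
  obtain ⟨a, ha⟩ := hres (residue B b)
  have hb : b - algebraMap A B a ∈ maximalIdeal B := by
    rw [← residue_eq_zero_iff, map_sub, ← RingHom.comp_apply, ha, sub_self]
  have hsplit : z * b = a • z + z * (b - algebraMap A B a) := by
    rw [Algebra.smul_def]
    ring
  rw [hsplit]
  refine add_mem (Submodule.mem_sup_left (M.smul_mem a hzM)) (Submodule.mem_sup_right ?_)
  rw [Submodule.restrictScalars_mem, pow_succ]
  exact Ideal.mul_mem_mul hzj hb

lemma supMaximalIdealPow_succ_inf_eq_of_notMem (hj : j ∉ addValSet M) :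
    supMaximalIdealPow M (j + 1) ⊓ (maximalIdeal B ^ j).restrictScalars A =
      (maximalIdeal B ^ (j + 1)).restrictScalars A := by
  refine le_antisymm (fun x ⟨hx, hxj⟩ ↦ ?_)
    (le_inf le_sup_right (Submodule.restrictScalars_mono A (Ideal.pow_le_pow_right j.le_succ)))
  obtain ⟨y, hy, r, hr, rfl⟩ := Submodule.mem_sup.mp hx
  have hyj : (j : ℕ∞) ≤ addVal B y := by
    rw [← mem_maximalIdeal_pow_iff_le_addVal, ← add_sub_cancel_right y r]
    exact sub_mem hxj (Ideal.pow_le_pow_right j.le_succ hr)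
  have hy' : y ∈ maximalIdeal B ^ (j + 1) := by
    rw [mem_maximalIdeal_pow_iff_le_addVal, Nat.cast_succ]
    exact Order.add_one_le_of_lt (hyj.lt_of_ne fun h ↦ hj ⟨y, hy, h.symm⟩)
  exact add_mem hy' hr

lemma index_supMaximalIdealPow_succ_of_notMem (hj : j ∉ addValSet M) :
    (supMaximalIdealPow M (j + 1)).toAddSubgroup.index =
      Nat.card (ResidueField B) * (supMaximalIdealPow M j).toAddSubgroup.index := by
  have hle : (maximalIdeal B ^ (j + 1)).restrictScalars A ≤
      (maximalIdeal B ^ j).restrictScalars A :=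
    Submodule.restrictScalars_mono A (Ideal.pow_le_pow_right j.le_succ)
  have hsup : supMaximalIdealPow M j =
      supMaximalIdealPow M (j + 1) ⊔ (maximalIdeal B ^ j).restrictScalars A := by
    rw [supMaximalIdealPow, supMaximalIdealPow, sup_assoc, sup_eq_right.mpr hle]
  have hinf : (supMaximalIdealPow M (j + 1)).toAddSubgroup ⊓
      ((maximalIdeal B ^ j).restrictScalars A).toAddSubgroup =
        ((maximalIdeal B ^ (j + 1)).restrictScalars A).toAddSubgroup := by
    ext x
    exact SetLike.ext_iff.mp (supMaximalIdealPow_succ_inf_eq_of_notMem hj) x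
  rw [← AddSubgroup.relIndex_mul_index
      (Submodule.toAddSubgroup_mono (supMaximalIdealPow_succ_le M j)), hsup,
    Submodule.sup_toAddSubgroup, AddSubgroup.relIndex_sup_left,
    ← AddSubgroup.inf_relIndex_right, hinf]
  congr 1
  exact relIndex_maximalIdeal_pow_succ j

open scoped Classical in
lemma index_supMaximalIdealPow
    (hres : Function.Surjective ((residue B).comp (algebraMap A B))) (j : ℕ) :
    (supMaximalIdealPow M j).toAddSubgroup.index =
      Nat.card (ResidueField B) ^ #{i ∈ range j | i ∉ addValSet M} := by
  induction j with
  | zero => simp [supMaximalIdealPow]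
  | succ j ih =>
    rw [range_add_one, filter_insert]
    by_cases hj : j ∈ addValSet M
    · rw [supMaximalIdealPow_succ_eq_of_mem hres hj, ih, if_neg (not_not.mpr hj)]
    · rw [index_supMaximalIdealPow_succ_of_notMem hj, ih, if_pos hj,
        card_insert_of_notMem (by simp), pow_succ']

lemma supMaximalIdealPow_eq_self [IsLocalRing A] [IsNoetherianRing A] [Module.Finite A B] {e : ℕ}
    (he : Ideal.map (algebraMap A B) (maximalIdeal A) = maximalIdeal B ^ e)
    (hres : Function.Surjective ((residue B).comp (algebraMap A B))) {W : ℕ}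
    (hW : ∀ j, W ≤ j → j ∈ addValSet M) : supMaximalIdealPow M W = M := by
  have hstable : ∀ t, supMaximalIdealPow M (W + t) = supMaximalIdealPow M W := by
    intro t
    induction t with
    | zero => rfl
    | succ t ih => rw [← add_assoc, supMaximalIdealPow_succ_eq_of_mem hres (hW _ (by omega)), ih]
  refine le_antisymm ((le_iInf fun k ↦ ?_).trans
    (M.iInf_sup_pow_smul_top_eq (maximalIdeal.isMaximal A).ne_top).le) le_sup_left
  rw [← hstable (e * k), supMaximalIdealPow, Ideal.smul_top_eq_map, Ideal.map_pow, he, ← pow_mul]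
  exact sup_le_sup_left (Submodule.restrictScalars_mono A (Ideal.pow_le_pow_right (by omega))) _

lemma restrictScalars_maximalIdeal_pow_le [IsLocalRing A] [IsNoetherianRing A]
    [Module.Finite A B] {e : ℕ}
    (he : Ideal.map (algebraMap A B) (maximalIdeal A) = maximalIdeal B ^ e)
    (hres : Function.Surjective ((residue B).comp (algebraMap A B))) {W : ℕ}
    (hW : ∀ j, W ≤ j → j ∈ addValSet M) : (maximalIdeal B ^ W).restrictScalars A ≤ M :=
  le_sup_right.trans (supMaximalIdealPow_eq_self he hres hW).le

open scoped Classical in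
theorem natCard_quotient_eq_pow_card_gaps [IsLocalRing A] [IsNoetherianRing A]
    [Module.Finite A B] {e : ℕ}
    (he : Ideal.map (algebraMap A B) (maximalIdeal A) = maximalIdeal B ^ e)
    (hres : Function.Surjective ((residue B).comp (algebraMap A B))) {W : ℕ}
    (hW : ∀ j, W ≤ j → j ∈ addValSet M) :
    Nat.card (B ⧸ M) = Nat.card (ResidueField B) ^ #{j ∈ range W | j ∉ addValSet M} := by
  rw [← index_supMaximalIdealPow hres, supMaximalIdealPow_eq_self he hres hW]
  rfl

end Filtration

section Powers

variable {A B : Type*} [CommRing A] [IsDomain A] [IsDiscreteValuationRing A] [CommRing B]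
  [IsDomain B] [IsDiscreteValuationRing B] [Algebra A B] {n d : ℕ} {α : B}

lemma addVal_smul_pow (he : Ideal.map (algebraMap A B) (maximalIdeal A) = maximalIdeal B ^ n)
    (hn : n ≠ 0) (hα : addVal B α = d) (c : A) (i : ℕ) :
    addVal B (c • α ^ i) = n • addVal A c + (i * d : ℕ) := by
  rw [Algebra.smul_def, IsDiscreteValuationRing.addVal_mul, addVal_algebraMap he hn,
    IsDiscreteValuationRing.addVal_pow, hα]
  simp [nsmul_eq_mul]

lemma exists_addVal_smul_pow_eq
    (he : Ideal.map (algebraMap A B) (maximalIdeal A) = maximalIdeal B ^ n) (hn : n ≠ 0)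
    (hα : addVal B α = d) {c : A} {i : ℕ} (htop : addVal B (c • α ^ i) ≠ ⊤) :
    ∃ k : ℕ, addVal B (c • α ^ i) = (k * n + i * d : ℕ) := by
  rw [addVal_smul_pow he hn hα] at htop ⊢
  have hc : addVal A c ≠ ⊤ := fun h ↦ htop (by
    simp [h, nsmul_eq_mul, ENat.mul_top (Nat.cast_ne_zero.mpr hn)])
  obtain ⟨k, hk⟩ := ENat.ne_top_iff_exists.mp hc
  exact ⟨k, by simp [← hk, nsmul_eq_mul, mul_comm]⟩

lemma eq_of_addVal_smul_pow_eq
    (he : Ideal.map (algebraMap A B) (maximalIdeal A) = maximalIdeal B ^ n) (hn : n ≠ 0)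
    (hco : n.Coprime d) (hα : addVal B α = d) {c c' : A} {i i' : ℕ} (hi : i < n) (hi' : i' < n)
    (htop : addVal B (c • α ^ i) ≠ ⊤) (h : addVal B (c • α ^ i) = addVal B (c' • α ^ i')) :
    i = i' := by
  obtain ⟨k, hk⟩ := exists_addVal_smul_pow_eq he hn hα htop
  obtain ⟨k', hk'⟩ := exists_addVal_smul_pow_eq he hn hα (h ▸ htop)
  rw [hk, hk'] at h
  exact Nat.eq_of_mul_add_mul_eq hco hi hi' (by exact_mod_cast h)

theorem addValSet_span_pow_eq_closure
    (he : Ideal.map (algebraMap A B) (maximalIdeal A) = maximalIdeal B ^ n) (hn : 0 < n)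
    (hco : n.Coprime d) (hα : addVal B α = d) :
    addValSet (Submodule.span A (Set.range fun i : Fin n ↦ α ^ (i : ℕ))) =
      AddSubmonoid.closure ({n, d} : Set ℕ) := by
  ext j
  constructor
  · rintro ⟨x, hx, hxj⟩
    obtain ⟨c, rfl⟩ := (Submodule.mem_span_range_iff_exists_fun A).mp hx
    have : Nonempty (Fin n) := ⟨⟨0, hn⟩⟩
    obtain ⟨i₀, -, hi₀⟩ := exists_min_image univ (fun i ↦ addVal B (c i • α ^ (i : ℕ)))
      univ_nonempty
    have htop : addVal B (c i₀ • α ^ (i₀ : ℕ)) ≠ ⊤ := by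
      intro htop
      have := AddValuation.map_le_sum (addVal B) (s := univ) fun i _ ↦ htop ▸ hi₀ i (mem_univ i)
      simp [hxj] at this
    have hsum : addVal B (∑ i, c i • α ^ (i : ℕ)) = addVal B (c i₀ • α ^ (i₀ : ℕ)) := by
      rw [← add_sum_erase _ _ (mem_univ i₀)]
      refine AddValuation.map_add_eq_of_lt_left _ (AddValuation.map_lt_sum _ htop fun i hi ↦ ?_)
      refine (hi₀ i (mem_univ i)).lt_of_ne fun h ↦ ne_of_mem_erase hi (Fin.ext ?_)
      exact (eq_of_addVal_smul_pow_eq he hn.ne' hco hα i₀.isLt i.isLt htop h).symm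
    obtain ⟨k, hk⟩ := exists_addVal_smul_pow_eq he hn.ne' hα htop
    rw [hsum, hk, Nat.cast_inj] at hxj
    exact (AddSubmonoid.mem_closure_pair ..).mpr ⟨k, i₀, by rw [← hxj, smul_eq_mul, smul_eq_mul]⟩
  · intro hj
    obtain ⟨a, b, hb, rfl⟩ := (Nat.mem_closure_pair_iff_exists_lt hn).mp hj
    obtain ⟨π, hπ⟩ := IsDiscreteValuationRing.exists_irreducible A
    refine ⟨π ^ a • α ^ b, Submodule.smul_mem _ _ (Submodule.subset_span ⟨⟨b, hb⟩, rfl⟩), ?_⟩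
    rw [addVal_smul_pow he hn.ne' hα, hπ.addVal_pow]
    simp [nsmul_eq_mul, mul_comm]

end Powers

theorem stmt_4_general (A : Type*) [CommRing A] [IsDomain A] [IsDiscreteValuationRing A]
    (q : ℕ) [Finite (IsLocalRing.ResidueField A)] (hq : Nat.card (IsLocalRing.ResidueField A) = q)
    (B : Type*) [CommRing B] [IsDomain B] [IsDiscreteValuationRing B] [Algebra A B]
    [Module.Free A B]
    (n : ℕ) (hn : n.Prime) (hrank : Module.finrank A B = n)
    (htot : Ideal.map (algebraMap A B) (IsLocalRing.maximalIdeal A)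
      = IsLocalRing.maximalIdeal B ^ n)
    (α : B) (d : ℕ)
    (hd : α ∈ IsLocalRing.maximalIdeal B ^ d) (hd' : α ∉ IsLocalRing.maximalIdeal B ^ (d + 1))
    (hnd : ¬ n ∣ d) :
    Nat.card (B ⧸ Subalgebra.toSubmodule (Algebra.adjoin A {α}))
      = q ^ (((d - 1) * (n - 1)) / 2) := by
  classical
  have hn0 : 0 < n := hn.pos
  have hd0 : 0 < d := Nat.pos_of_ne_zero fun h ↦ hnd (h ▸ dvd_zero n)
  have hco : n.Coprime d := (Nat.Prime.coprime_iff_not_dvd hn).mpr hnd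
  have hα : addVal B α = d := addVal_eq_of_mem_of_notMem hd hd'
  have : Module.Finite A B := Module.finite_of_finrank_pos (hrank ▸ hn0)
  have hcard := natCard_residueField_eq htot hn0.ne' hrank
  have hres := residue_comp_algebraMap_surjective htot hn0.ne' hcard
  set M := Submodule.span A (Set.range fun i : Fin n ↦ α ^ (i : ℕ))
  have hS : addValSet M = AddSubmonoid.closure {n, d} :=
    addValSet_span_pow_eq_closure htot hn0 hco hα
  have hW : ∀ j, (n - 1) * (d - 1) ≤ j → j ∈ addValSet M :=
    fun _ hj ↦ hS ▸ Nat.mem_closure_pair_of_le hco hn0 hd0 hj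
  have hpow : ∀ k, n ≤ k → α ^ k ∈ M := by
    refine fun k hk ↦ restrictScalars_maximalIdeal_pow_le htot hres hW
      (mem_maximalIdeal_pow_iff_le_addVal.mpr ?_)
    rw [IsDiscreteValuationRing.addVal_pow, hα, nsmul_eq_mul]
    exact_mod_cast Nat.mul_le_mul (by omega : n - 1 ≤ k) (Nat.sub_le d 1)
  have hgaps : #{j ∈ range ((n - 1) * (d - 1)) | j ∉ addValSet M} = (n - 1) * (d - 1) / 2 := by
    rw [hS]
    exact Nat.card_filter_notMem_closure_pair hco
  rw [Algebra.toSubmodule_adjoin_singleton_eq_span_pow hpow,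
    natCard_quotient_eq_pow_card_gaps htot hres hW, hgaps, hcard, hq, Nat.mul_comm (n - 1)]

/-- Let `F` be a non-archimedean local field with ring of integers `A` and residue field of
cardinality `q`, `n` a prime, and `B` the ring of integers of a totally ramified extension of
degree `n` (so `B` is a free `A`-module of rank `n` with `m_A B = m_B ^ n`).  If `α ∈ B` has
normalized valuation `d` with `n ∤ d`, then the `A`-module length of `B / A[α]` equals
`(d-1)(n-1)/2`; since the residue field has `q` elements this length `ℓ` is characterized by
`#(B / A[α]) = q ^ ℓ`. -/
theorem stmt_4 (A : Type*) [CommRing A] [IsDomain A] [IsDiscreteValuationRing A]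
    [IsAdicComplete (IsLocalRing.maximalIdeal A) A]
    (q : ℕ) [Finite (IsLocalRing.ResidueField A)] (hq : Nat.card (IsLocalRing.ResidueField A) = q)
    (B : Type*) [CommRing B] [IsDomain B] [IsDiscreteValuationRing B] [Algebra A B]
    [Module.Free A B]
    (n : ℕ) (hn : n.Prime) (hrank : Module.finrank A B = n)
    (htot : Ideal.map (algebraMap A B) (IsLocalRing.maximalIdeal A)
      = IsLocalRing.maximalIdeal B ^ n)
    (α : B) (d : ℕ)
    (hd : α ∈ IsLocalRing.maximalIdeal B ^ d) (hd' : α ∉ IsLocalRing.maximalIdeal B ^ (d + 1))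
    (hnd : ¬ n ∣ d) :
    Nat.card (B ⧸ Subalgebra.toSubmodule (Algebra.adjoin A {α}))
      = q ^ (((d - 1) * (n - 1)) / 2) :=
  stmt_4_general A q hq B n hn hrank htot α d hd hd' hnd
end

section
/- Let κ be a finite field with q elements, n ≥ 2, and u ∈ κ^×. The number of tuples (x, y, z, w) with x ∈ M_{n−1}(κ), y ∈ κ^{n−1} a column vector, z ∈ κ^{n−1} a row vector, w ∈ κ, satisfying: (i) the characteristic polynomial of x is X^{n−1}, (ii) rank(x) = n−2, and (iii) det [[x, y],[z, w]] = u, equals #GL_{n−1}(κ) · q^{n−1}. -/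
/-!
Write `m = n - 1`. If `charpoly x = X ^ m` then `x ^ m = 0` and `adjugate x = (-x) ^ (m - 1)`, so
expanding the bordered determinant gives `det [[x, y], [z, w]] = (-1) ^ m * z x ^ (m - 1) y`.
Hence `det = u ≠ 0` forces `x ^ (m - 1) y ≠ 0`: `y` is a cyclic vector of the nilpotent `x`, the
Krylov matrix `P` with columns `y, x y, …, x ^ (m - 1) y` is invertible, and `x = P J P⁻¹`,
`y = P e₀` for the nilpotent shift `J`. Conversely every `P ∈ GL_m` gives such a pair, and
`PJP⁻¹` has rank `m - 1`. So `(P, z P, w)` identifies the tuples with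
`GL_m × {c | c_{m-1} = (-1) ^ m u} × κ`, which has `#GL_m · q ^ (m - 1) · q` elements.
-/

open Matrix Polynomial Module

namespace Matrix

section Bordered

variable {n ι R : Type*} [Fintype n] [DecidableEq n] [Fintype ι] [DecidableEq ι] [Unique ι]
  [CommRing R]

theorem det_fromBlocks_of_isLeftRegular_det (A : Matrix n n R) (B : Matrix n ι R)
    (C : Matrix ι n R) (D : Matrix ι ι R) (hA : IsLeftRegular A.det) :
    (fromBlocks A B C D).det =
      D default default * A.det - (C * adjugate A * B) default default := by
  have hmul : fromBlocks A B C D * fromBlocks (adjugate A) (-(adjugate A * B)) 0 (A.det • 1) =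
      fromBlocks (A.det • 1) 0 (C * adjugate A) (A.det • D - C * adjugate A * B) := by
    simp only [fromBlocks_multiply, mul_adjugate, Matrix.mul_neg, ← Matrix.mul_assoc,
      Matrix.mul_zero, add_zero, Matrix.mul_smul, Matrix.mul_one, Matrix.smul_mul,
      Matrix.one_mul]
    congr 1 <;> abel
  have hdet := congrArg det hmul
  rw [det_mul, det_fromBlocks_zero₂₁, det_fromBlocks_zero₁₂, det_adjugate, det_smul, det_smul,
    det_one, det_one, Fintype.card_unique (α := ι), pow_one, det_unique (A.det • D - _)] at hdet
  have hpow : A.det ^ (Fintype.card n - 1) * A.det = A.det ^ Fintype.card n := by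
    rcases isEmpty_or_nonempty n with hn | hn
    · simp [det_isEmpty]
    · exact pow_sub_one_mul Fintype.card_ne_zero _
  refine hA.pow (Fintype.card n) ?_
  rw [← hpow] at hdet ⊢
  simp only [sub_apply, smul_apply, smul_eq_mul] at hdet
  linear_combination hdet

theorem charmatrix_map_evalRingHom_zero (A : Matrix n n R) :
    (charmatrix A).map (evalRingHom 0) = -A := by
  ext i j
  by_cases h : i = j <;> simp [h]

theorem det_fromBlocks_of_unique (A : Matrix n n R) (B : Matrix n ι R) (C : Matrix ι n R)
    (D : Matrix ι ι R) :
    (fromBlocks A B C D).det =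
      D default default * A.det - (C * adjugate A * B) default default := by
  -- The regular case applies to `X + A` over `R[X]`, whose determinant is monic; set `X = 0`.
  have h := det_fromBlocks_of_isLeftRegular_det (charmatrix (-A)) (B.map Polynomial.C)
    (C.map Polynomial.C) (D.map Polynomial.C) (charpoly_monic (-A)).isRegular.left
  have hadj : (adjugate (charmatrix (-A))).map (evalRingHom 0) = adjugate A := by
    rw [← RingHom.mapMatrix_apply, RingHom.map_adjugate, RingHom.mapMatrix_apply,
      charmatrix_map_evalRingHom_zero, neg_neg]
  have h0 := congrArg (evalRingHom (0 : R)) h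
  rw [RingHom.map_det, RingHom.mapMatrix_apply, fromBlocks_map, map_sub, map_mul,
    RingHom.map_det, RingHom.mapMatrix_apply, charmatrix_map_evalRingHom_zero, neg_neg,
    ← map_apply (f := evalRingHom 0), ← map_apply (f := evalRingHom 0), Matrix.map_mul,
    Matrix.map_mul, hadj] at h0
  simpa [Matrix.map_map, Function.comp_def] using h0

theorem adjugate_eq_of_charpoly_eq_X_pow (A : Matrix n n R)
    (hA : A.charpoly = X ^ Fintype.card n) :
    adjugate A = (-1 : R) ^ (Fintype.card n - 1) • A ^ (Fintype.card n - 1) := by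
  -- Over `R[X]`, `(X - A) * N = X ^ m - A ^ m = χ_A` for `N = ∑ X ^ i A ^ (m - 1 - i)`.
  -- Cancelling the regular `X ^ m` gives `adjugate (X - A) = N`; then set `X = 0`.
  set m := Fintype.card n
  rcases isEmpty_or_nonempty n with hn | hn
  · exact Subsingleton.elim _ _
  have hAm : A ^ m = 0 := by simpa [hA] using aeval_self_charpoly A
  have hcomm :=
    scalar_commute (X : R[X]) (Commute.all X) ((Polynomial.C : R →+* R[X]).mapMatrix A)
  set N := ∑ i ∈ Finset.range m,
    scalar n (X : R[X]) ^ i * (Polynomial.C : R →+* R[X]).mapMatrix A ^ (m - 1 - i)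
  have hKN : charmatrix A * N = (X ^ m : R[X]) • 1 := by
    rw [charmatrix, hcomm.mul_geom_sum₂, ← map_pow, ← map_pow, hAm, map_zero, sub_zero,
      scalar_apply, smul_one_eq_diagonal]
  have hadj : (X ^ m : R[X]) • adjugate (charmatrix A) = (X ^ m : R[X]) • N := by
    rw [← Matrix.mul_one (adjugate _), ← Matrix.mul_smul, ← hKN, ← Matrix.mul_assoc,
      adjugate_mul, ← charpoly, hA, Matrix.smul_mul, Matrix.one_mul]
  have hN : adjugate (charmatrix A) = N :=
    Matrix.ext fun i j => (monic_X_pow m).isRegular.left (congrFun (congrFun hadj i) j)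
  have hX : (evalRingHom (0 : R)).mapMatrix (scalar n X) = 0 := by
    ext i j
    by_cases h : i = j <;> simp [h]
  have hC : (evalRingHom (0 : R)).mapMatrix ((Polynomial.C : R →+* R[X]).mapMatrix A) = A := by
    ext; simp
  have h0 := congrArg (evalRingHom (0 : R)).mapMatrix hN
  rw [RingHom.map_adjugate, RingHom.mapMatrix_apply, charmatrix_map_evalRingHom_zero] at h0
  simp only [N, map_sum, map_mul, map_pow, hX, hC] at h0
  rw [Finset.sum_eq_single 0 (fun i _ hi => by rw [zero_pow hi, Matrix.zero_mul])
    (fun h => absurd (Finset.mem_range.2 Fintype.card_pos) h), pow_zero, Matrix.one_mul,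
    Nat.sub_zero, ← neg_one_smul R A, adjugate_smul] at h0
  rw [← h0, smul_smul, ← mul_pow, neg_one_mul, neg_neg, one_pow, one_smul]

theorem det_fromBlocks_replicateCol_of_charpoly_eq_X_pow [Nonempty n] (A : Matrix n n R)
    (hA : A.charpoly = X ^ Fintype.card n) (b c : n → R) (d : R) :
    (fromBlocks A (replicateCol ι b) (replicateRow ι c) (of fun _ _ => d)).det =
      (-1) ^ Fintype.card n * (c ⬝ᵥ (A ^ (Fintype.card n - 1) *ᵥ b)) := by
  have hdet : A.det = 0 := by
    rw [det_eq_sign_charpoly_coeff, hA, coeff_X_pow, if_neg Fintype.card_ne_zero.symm, mul_zero]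
  rw [det_fromBlocks_of_unique, hdet, mul_zero, zero_sub, adjugate_eq_of_charpoly_eq_X_pow A hA,
    Matrix.mul_smul, Matrix.smul_mul, smul_apply, ← replicateRow_vecMul,
    replicateRow_mul_replicateCol_apply, dotProduct_mulVec, smul_eq_mul,
    ← Nat.sub_add_cancel Fintype.card_pos, pow_succ, Nat.add_sub_cancel]
  ring

end Bordered

theorem units_conj_pow_mulVec {n R : Type*} [Fintype n] [DecidableEq n] [CommRing R]
    (P : (Matrix n n R)ˣ) (A : Matrix n n R) (v : n → R) (j : ℕ) :
    ((P : Matrix n n R) * A * (↑P⁻¹ : Matrix n n R)) ^ j *ᵥ ((P : Matrix n n R) *ᵥ v) =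
      (P : Matrix n n R) *ᵥ (A ^ j *ᵥ v) := by
  rw [Units.conj_pow, mulVec_mulVec, Matrix.mul_assoc, Units.inv_mul, Matrix.mul_one,
    ← mulVec_mulVec]

end Matrix

section CyclicVector

variable {K V : Type*} [Field K] [AddCommGroup V] [Module K V]

theorem linearIndependent_pow_apply {f : V →ₗ[K] V} {v : V} {m : ℕ} (hm : (f ^ m) v = 0)
    (hm' : (f ^ (m - 1)) v ≠ 0) : LinearIndependent K fun i : Fin m => (f ^ (i : ℕ)) v := by
  rw [Fintype.linearIndependent_iff]
  intro g hg
  by_contra! hne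
  obtain ⟨j, hj, hmin⟩ := exists_minimal_of_wellFoundedLT (fun j => g j ≠ 0) hne
  -- `f ^ (m - 1 - j)` kills every term but the `j`-th: earlier coefficients vanish by
  -- minimality of `j`, later powers reach `f ^ m`.
  have hterm : ∀ i, (f ^ (m - 1 - j)) (g i • (f ^ (i : ℕ)) v) =
      if i = j then g j • (f ^ (m - 1)) v else 0 := by
    intro i
    rw [map_smul, ← Module.End.mul_apply, ← pow_add]
    rcases lt_trichotomy i j with hij | rfl | hij
    · rw [if_neg hij.ne, not_not.1 fun h => hij.not_ge (hmin h hij.le), zero_smul]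
    · rw [if_pos rfl, Nat.sub_add_cancel (by omega)]
    · rw [if_neg hij.ne', Module.End.pow_map_zero_of_le (by omega) hm, smul_zero]
  have h := congrArg (f ^ (m - 1 - j)) hg
  rw [map_sum, map_zero, Finset.sum_congr rfl fun i _ => hterm i, Finset.sum_ite_eq'] at h
  simp only [Finset.mem_univ, if_true, smul_eq_zero] at h
  exact h.elim hj hm'

theorem finrank_range_eq_of_pow_apply [FiniteDimensional K V] {f : V →ₗ[K] V} {v : V}
    (hm : (f ^ finrank K V) v = 0) (hm' : (f ^ (finrank K V - 1)) v ≠ 0) :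
    finrank K (LinearMap.range f) = finrank K V - 1 := by
  set m := finrank K V
  have hm0 : m ≠ 0 := by rintro h; simp [h] at hm hm'; exact hm' hm
  have hker : 1 ≤ finrank K (LinearMap.ker f) := by
    rw [Submodule.one_le_finrank_iff, Submodule.ne_bot_iff]
    refine ⟨_, ?_, hm'⟩
    rwa [LinearMap.mem_ker, ← Module.End.mul_apply, ← pow_succ', Nat.sub_add_cancel (by omega)]
  have hrange : m - 1 ≤ finrank K (LinearMap.range f) := by
    rcases Nat.lt_or_ge m 2 with h | h
    · omega
    have hli := linearIndependent_pow_apply (v := f v) (m := m - 1)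
      (by rwa [← Module.End.mul_apply, ← pow_succ, Nat.sub_add_cancel (by omega)])
      (by rwa [← Module.End.mul_apply, ← pow_succ, Nat.sub_add_cancel (by omega)])
    calc m - 1
        = finrank K (Submodule.span K (Set.range fun i : Fin (m - 1) => (f ^ (i : ℕ)) (f v))) :=
          by rw [finrank_span_eq_card hli, Fintype.card_fin]
      _ ≤ finrank K (LinearMap.range f) := by
          refine Submodule.finrank_mono (Submodule.span_le.2 ?_)
          rintro _ ⟨i, rfl⟩
          dsimp only
          rw [← Module.End.mul_apply, ← pow_succ, pow_succ', Module.End.mul_apply]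
          exact LinearMap.mem_range_self f _
  have := LinearMap.finrank_range_add_finrank_ker f
  omega

theorem Matrix.rank_eq_of_pow_mulVec {n : Type*} [Fintype n] [DecidableEq n] {A : Matrix n n K}
    {v : n → K} (h : A ^ Fintype.card n *ᵥ v = 0) (h' : A ^ (Fintype.card n - 1) *ᵥ v ≠ 0) :
    A.rank = Fintype.card n - 1 := by
  have hd : finrank K (n → K) = Fintype.card n := Module.finrank_fintype_fun_eq_card K
  rw [rank, ← toLin'_apply', ← hd]
  apply finrank_range_eq_of_pow_apply <;> rwa [← toLin'_pow, toLin'_apply, hd]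

end CyclicVector

section ShiftKrylov

variable (R : Type*) [CommRing R] (m : ℕ)

def shiftMatrix : Matrix (Fin m) (Fin m) R :=
  of fun i j => if (i : ℕ) = j + 1 then 1 else 0

variable {R m}

theorem shiftMatrix_pow_apply (d : ℕ) (i j : Fin m) :
    (shiftMatrix R m ^ d) i j = if (i : ℕ) = j + d then 1 else 0 := by
  induction d generalizing i j with
  | zero => simp [one_apply, Fin.ext_iff]
  | succ d ih =>
    rw [pow_succ, Matrix.mul_apply]
    simp only [ih]
    simp only [shiftMatrix, of_apply, mul_ite, mul_one, mul_zero]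
    by_cases h : (j : ℕ) + 1 < m
    · rw [Finset.sum_eq_single ⟨j + 1, h⟩ (fun l _ hl => if_neg fun h' => hl (Fin.ext h'))
        (by simp), if_pos rfl]
      simp only [add_assoc, add_comm 1 d]
    · rw [Finset.sum_eq_zero fun l _ => if_neg (by omega), if_neg (by omega)]

theorem shiftMatrix_pow_self : shiftMatrix R m ^ m = 0 := by
  ext i j
  rw [shiftMatrix_pow_apply, if_neg (by omega), Matrix.zero_apply]

theorem shiftMatrix_pow_mulVec_single_zero [NeZero m] (i : Fin m) :
    shiftMatrix R m ^ (i : ℕ) *ᵥ Pi.single 0 1 = Pi.single i 1 := by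
  ext j
  simp [shiftMatrix_pow_apply, Pi.single_apply, Fin.ext_iff]

def krylovMatrix (A : Matrix (Fin m) (Fin m) R) (v : Fin m → R) : Matrix (Fin m) (Fin m) R :=
  of fun i j => (A ^ (j : ℕ) *ᵥ v) i

theorem krylovMatrix_mulVec_single (A : Matrix (Fin m) (Fin m) R) (v : Fin m → R) (j : Fin m) :
    krylovMatrix A v *ᵥ Pi.single j 1 = A ^ (j : ℕ) *ᵥ v := by
  rw [mulVec_single_one]
  rfl

theorem krylovMatrix_mul_shiftMatrix {A : Matrix (Fin m) (Fin m) R} {v : Fin m → R}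
    (h : A ^ m *ᵥ v = 0) : krylovMatrix A v * shiftMatrix R m = A * krylovMatrix A v := by
  ext i j
  have hR : (A * krylovMatrix A v) i j = (A ^ ((j : ℕ) + 1) *ᵥ v) i := by
    rw [pow_succ', ← mulVec_mulVec]
    rfl
  rw [hR, Matrix.mul_apply]
  simp only [krylovMatrix, shiftMatrix, of_apply, mul_ite, mul_one, mul_zero]
  by_cases hj : (j : ℕ) + 1 < m
  · rw [Finset.sum_eq_single ⟨j + 1, hj⟩ (fun l _ hl => if_neg fun h' => hl (Fin.ext h'))
      (by simp), if_pos rfl]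
  · rw [Finset.sum_eq_zero fun l _ => if_neg (by omega), show (j : ℕ) + 1 = m by omega, h,
      Pi.zero_apply]

theorem krylovMatrix_conj_shiftMatrix [NeZero m] (P : (Matrix (Fin m) (Fin m) R)ˣ) :
    krylovMatrix
        ((P : Matrix (Fin m) (Fin m) R) * shiftMatrix R m * (↑P⁻¹ : Matrix (Fin m) (Fin m) R))
        ((P : Matrix (Fin m) (Fin m) R) *ᵥ Pi.single 0 1) = P := by
  ext i j
  rw [krylovMatrix, of_apply, units_conj_pow_mulVec, shiftMatrix_pow_mulVec_single_zero,
    mulVec_single_one, col_apply]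

theorem isUnit_krylovMatrix {K : Type*} [Field K] {A : Matrix (Fin m) (Fin m) K} {v : Fin m → K}
    (h : A ^ m *ᵥ v = 0) (h' : A ^ (m - 1) *ᵥ v ≠ 0) : IsUnit (krylovMatrix A v) := by
  have hcol : (krylovMatrix A v).col = fun j : Fin m => (toLin' A ^ (j : ℕ)) v := by
    ext j i
    rw [← toLin'_pow, toLin'_apply]
    rfl
  rw [← linearIndependent_cols_iff_isUnit, hcol]
  exact linearIndependent_pow_apply (by rwa [← toLin'_pow, toLin'_apply])
    (by rwa [← toLin'_pow, toLin'_apply])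

end ShiftKrylov

theorem Nat.card_fun_fin_succ_last_eq {α : Type*} (k : ℕ) (a : α) :
    Nat.card {c : Fin (k + 1) → α // c (Fin.last k) = a} = Nat.card α ^ k := by
  rw [← Nat.card_fin k, ← Nat.card_fun, Nat.card_fin]
  exact Nat.card_congr
    { toFun := fun c => Fin.init c.1
      invFun := fun r => ⟨Fin.snoc r a, Fin.snoc_last _ _⟩
      left_inv := fun ⟨c, hc⟩ => Subtype.ext (by subst hc; exact Fin.snoc_init_self c)
      right_inv := fun r => Fin.init_snoc _ _ }

section Borderings

variable {K : Type*} [Field K] {k : ℕ}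

variable (K k) in
def nilpotentBorderings (u : K) :
    Set (Matrix (Fin (k + 1)) (Fin (k + 1)) K × Matrix (Fin (k + 1)) (Fin 1) K ×
      Matrix (Fin 1) (Fin (k + 1)) K × K) :=
  {p | p.1.charpoly = X ^ (k + 1) ∧ p.1.rank = k ∧
    (fromBlocks p.1 p.2.1 p.2.2.1 (of fun _ _ => p.2.2.2)).det = u}

def bordering (P : GL (Fin (k + 1)) K) (c : Fin (k + 1) → K) (w : K) :
    Matrix (Fin (k + 1)) (Fin (k + 1)) K × Matrix (Fin (k + 1)) (Fin 1) K ×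
      Matrix (Fin 1) (Fin (k + 1)) K × K :=
  ((P : Matrix (Fin (k + 1)) (Fin (k + 1)) K) * shiftMatrix K (k + 1) *
      (↑P⁻¹ : Matrix (Fin (k + 1)) (Fin (k + 1)) K),
    replicateCol (Fin 1) ((P : Matrix (Fin (k + 1)) (Fin (k + 1)) K) *ᵥ Pi.single 0 1),
    replicateRow (Fin 1) (c ᵥ* (↑P⁻¹ : Matrix (Fin (k + 1)) (Fin (k + 1)) K)), w)

theorem bordering_mem {u : K} (P : GL (Fin (k + 1)) K) {c : Fin (k + 1) → K}
    (hc : c (Fin.last k) = (-1) ^ (k + 1) * u) (w : K) :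
    bordering P c w ∈ nilpotentBorderings K k u := by
  simp only [bordering, nilpotentBorderings, Set.mem_ofPred_eq]
  set x := (P : Matrix (Fin (k + 1)) (Fin (k + 1)) K) * shiftMatrix K (k + 1) *
    (↑P⁻¹ : Matrix (Fin (k + 1)) (Fin (k + 1)) K)
  set y := (P : Matrix (Fin (k + 1)) (Fin (k + 1)) K) *ᵥ Pi.single 0 1
  have hx : x ^ (k + 1) = 0 := by
    rw [Units.conj_pow, shiftMatrix_pow_self, Matrix.mul_zero, Matrix.zero_mul]
  have hchar : x.charpoly = X ^ (k + 1) := by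
    simpa [sub_eq_zero] using (isNilpotent_charpoly_sub_pow_of_isNilpotent ⟨k + 1, hx⟩).eq_zero
  have hlast :
      x ^ k *ᵥ y = (P : Matrix (Fin (k + 1)) (Fin (k + 1)) K) *ᵥ Pi.single (Fin.last k) 1 := by
    rw [units_conj_pow_mulVec]
    congr 1
    simpa using shiftMatrix_pow_mulVec_single_zero (R := K) (Fin.last k)
  have hne : x ^ k *ᵥ y ≠ 0 := by
    rw [hlast, ← mulVec_zero (P : Matrix (Fin (k + 1)) (Fin (k + 1)) K)]
    exact (mulVec_injective_iff_isUnit.2 P.isUnit).ne (by simp)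
  refine ⟨hchar, ?_, ?_⟩
  · simpa using rank_eq_of_pow_mulVec (v := y) (by rw [Fintype.card_fin, hx, zero_mulVec])
      (by simpa using hne)
  · rw [det_fromBlocks_replicateCol_of_charpoly_eq_X_pow _ (by rwa [Fintype.card_fin]),
      Fintype.card_fin, Nat.add_sub_cancel, hlast, dotProduct_mulVec, vecMul_vecMul,
      Units.inv_mul, vecMul_one, dotProduct_single, mul_one, hc, ← mul_assoc, ← mul_pow,
      neg_one_mul, neg_neg, one_pow, one_mul]

theorem bordering_injective {P P' : GL (Fin (k + 1)) K} {c c' : Fin (k + 1) → K} {w w' : K}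
    (h : bordering P c w = bordering P' c' w') : P = P' ∧ c = c' ∧ w = w' := by
  simp only [bordering, Prod.mk.injEq] at h
  obtain ⟨hx, hy, hz, rfl⟩ := h
  obtain rfl : P = P' := Units.ext <| by
    rw [← krylovMatrix_conj_shiftMatrix P, hx, replicateCol_injective hy,
      krylovMatrix_conj_shiftMatrix]
  refine ⟨rfl, ?_, rfl⟩
  simpa [vecMul_vecMul] using congrArg (· ᵥ* (P : Matrix (Fin (k + 1)) (Fin (k + 1)) K))
    (replicateRow_injective hz)

theorem exists_bordering {u : K} (hu : u ≠ 0) {p} (hp : p ∈ nilpotentBorderings K k u) :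
    ∃ (P : GL (Fin (k + 1)) K) (c : Fin (k + 1) → K) (w : K),
      c (Fin.last k) = (-1) ^ (k + 1) * u ∧ bordering P c w = p := by
  obtain ⟨x, y, z, w⟩ := p
  obtain ⟨hchar, -, hdet⟩ := hp
  set b : Fin (k + 1) → K := fun i => y i 0
  set c : Fin (k + 1) → K := z 0
  have hy : y = replicateCol (Fin 1) b := by
    ext i j
    rw [Subsingleton.elim j 0]
    rfl
  have hz : z = replicateRow (Fin 1) c := by
    ext i j
    rw [Subsingleton.elim i 0]
    rfl
  rw [hy, hz, det_fromBlocks_replicateCol_of_charpoly_eq_X_pow x (by rwa [Fintype.card_fin]),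
    Fintype.card_fin, Nat.add_sub_cancel] at hdet
  have hx : x ^ (k + 1) = 0 := by simpa [hchar] using aeval_self_charpoly x
  have hne : x ^ k *ᵥ b ≠ 0 := fun h0 => hu (by rw [← hdet, h0, dotProduct_zero, mul_zero])
  have hP := isUnit_krylovMatrix (by rw [hx, zero_mulVec]) hne
  refine ⟨hP.unit, c ᵥ* (hP.unit : Matrix (Fin (k + 1)) (Fin (k + 1)) K), w, ?_, ?_⟩
  · show c ⬝ᵥ (x ^ k *ᵥ b) = _
    rw [← hdet, ← mul_assoc, ← mul_pow, neg_one_mul, neg_neg, one_pow, one_mul]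
  · have hJ : (hP.unit : Matrix (Fin (k + 1)) (Fin (k + 1)) K) * shiftMatrix K (k + 1) =
        x * hP.unit := by
      rw [IsUnit.unit_spec, krylovMatrix_mul_shiftMatrix (by rw [hx, zero_mulVec])]
    rw [bordering, hJ, Units.mul_inv_cancel_right, vecMul_vecMul, Units.mul_inv, vecMul_one,
      IsUnit.unit_spec, krylovMatrix_mulVec_single, Fin.val_zero, pow_zero, one_mulVec, hy, hz]

theorem card_nilpotentBorderings (u : Kˣ) :
    Nat.card (nilpotentBorderings K k u) =
      Nat.card (GL (Fin (k + 1)) K) * Nat.card K ^ (k + 1) := by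
  let Φ : GL (Fin (k + 1)) K × {c : Fin (k + 1) → K // c (Fin.last k) = (-1) ^ (k + 1) * u} ×
      K → nilpotentBorderings K k u :=
    fun q => ⟨bordering q.1 q.2.1 q.2.2, bordering_mem q.1 q.2.1.2 q.2.2⟩
  have hΦ : Function.Bijective Φ := by
    refine ⟨fun q q' h => ?_, fun p => ?_⟩
    · obtain ⟨h1, h2, h3⟩ := bordering_injective (Subtype.ext_iff.1 h)
      exact Prod.ext h1 (Prod.ext (Subtype.ext h2) h3)
    · obtain ⟨P, c, w, hc, hp⟩ := exists_bordering u.ne_zero p.2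
      exact ⟨(P, ⟨c, hc⟩, w), Subtype.ext hp⟩
  rw [← Nat.card_congr (Equiv.ofBijective Φ hΦ), Nat.card_prod, Nat.card_prod,
    Nat.card_fun_fin_succ_last_eq, pow_succ]

end Borderings

/-- Over a finite field `κ` with `q` elements and `n ≥ 2`, the number of tuples `(x, y, z, w)`
with `x` an `(n−1) × (n−1)` matrix with characteristic polynomial `X^(n−1)` and rank `n−2`,
`y` a column vector, `z` a row vector, `w` a scalar, such that `det [[x, y],[z, w]] = u`
(for a fixed unit `u`), equals `#GL_(n−1)(κ) · q^(n−1)`. -/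
theorem stmt_11 (κ : Type*) [Field κ] [Fintype κ] (q : ℕ) (hq : Fintype.card κ = q)
    (n : ℕ) (hn : 2 ≤ n) (u : κˣ) :
    Nat.card {p : Matrix (Fin (n - 1)) (Fin (n - 1)) κ × Matrix (Fin (n - 1)) (Fin 1) κ ×
        Matrix (Fin 1) (Fin (n - 1)) κ × κ //
        Matrix.charpoly p.1 = Polynomial.X ^ (n - 1) ∧ p.1.rank = n - 2 ∧
          (Matrix.fromBlocks p.1 p.2.1 p.2.2.1 (Matrix.of fun _ _ => p.2.2.2)).det = ↑u}
      = Nat.card (GL (Fin (n - 1)) κ) * q ^ (n - 1) := by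
  obtain ⟨k, rfl⟩ : ∃ k, n = k + 2 := ⟨n - 2, by omega⟩
  rw [← hq, ← Nat.card_eq_fintype_card]
  exact card_nilpotentBorderings u
end

section
/- Let q be a prime power, d, m ≥ 1, set R = 𝔽_{q^d}[t]/(t^m) and R' = 𝔽_{q^{2d}}[t]/(t^m), and let σ : R' → R' be the ring automorphism acting on coefficients by the Frobenius x ↦ x^{q^d} (and fixing t). Then the norm map N : (R')^× → R^×, N(u) = u·σ(u), is surjective, and its kernel has cardinality (q^d + 1)·q^{d(m−1)}. -/
/-!
Write `Q = q^d`, `N u = u σ(u)` and `t` for the class of `X`. Since σ is an involution, `N` lands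
in the σ-fixed units. Conversely, let `r` be a fixed unit. Its constant term is a norm from the
residue field: in the cyclic group `K'ˣ` of order `(Q - 1)(Q + 1)` the `(Q + 1)`-th powers are
exactly the elements killed by `Q - 1`, i.e. the nonzero fixed points of `x ↦ x^Q`. This solves
`r ≡ N c mod t`, and the approximation is then improved `t`-adically: if a fixed `r` satisfies
`r ≡ 1 mod t^k`, then `δ = θ (r - 1)`, where `θ + σ(θ) = 1`, gives `N(1 + δ) ≡ r mod t^(2k)`.
Counting coefficients gives `#R'ˣ = (Q² - 1) Q^(2(m-1))` and `#Rˣ = (Q - 1) Q^(m-1)`, so the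
kernel of the surjection `N : R'ˣ → Rˣ` has `(Q + 1) Q^(m-1)` elements.
-/

/-- The truncated polynomial ring `𝔽[t]/(t^m)`. -/
abbrev TruncPoly (K' : Type*) [Field K'] (m : ℕ) : Type _ :=
  Polynomial K' ⧸ (Ideal.span {(Polynomial.X : Polynomial K') ^ m})

open Polynomial

theorem IsCyclic.ker_powMonoidHom_eq_range {G : Type*} [CommGroup G] [IsCyclic G] [Finite G]
    {a b : ℕ} (hG : Nat.card G = a * b) :
    (powMonoidHom a : G →* G).ker = (powMonoidHom b : G →* G).range := by
  have hb : 0 < b := Nat.pos_of_ne_zero <| by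
    rintro rfl
    exact Nat.card_pos.ne' (hG.trans (mul_zero a))
  refine (Subgroup.eq_of_le_of_card_ge ?_ ?_).symm
  · rintro _ ⟨x, rfl⟩
    rw [MonoidHom.mem_ker, powMonoidHom_apply, powMonoidHom_apply, ← pow_mul, mul_comm, ← hG,
      pow_card_eq_one']
  · rw [IsCyclic.card_powMonoidHom_ker, IsCyclic.card_powMonoidHom_range, hG,
      Nat.gcd_mul_right_left, Nat.gcd_mul_left_left, Nat.mul_div_cancel _ hb]

lemma Nat.card_units_subtype {M : Type*} [Monoid M] (P : M → Prop) :
    Nat.card {u : Mˣ // P u} = Nat.card {x : M // IsUnit x ∧ P x} :=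
  Nat.card_congr
    { toFun u := ⟨u.1, u.1.isUnit, u.2⟩
      invFun x := ⟨x.2.1.unit, x.2.2⟩
      left_inv _ := Subtype.ext (Units.ext rfl)
      right_inv _ := rfl }

lemma Nat.card_fin_succ_pi_subtype {β : Type*} [Finite β] (q p : β → Prop) (n : ℕ) :
    Nat.card {c : Fin (n + 1) → β // q (c 0) ∧ ∀ i, p (c i)}
      = Nat.card {b // q b ∧ p b} * Nat.card {b // p b} ^ n := by
  classical
  have := Fintype.ofFinite β
  have hpi : ({c | q (c 0) ∧ ∀ i, p (c i)} : Finset (Fin (n + 1) → β))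
      = Fintype.piFinset
          (Fin.cons ({b | q b ∧ p b} : Finset β) fun _ => ({b | p b} : Finset β)) := by
    ext c
    simp [Fintype.mem_piFinset, Fin.forall_fin_succ, and_assoc]
  simp only [Nat.card_eq_fintype_card, Fintype.card_subtype, hpi, Fintype.card_piFinset,
    Fin.prod_univ_succ, Fin.cons_zero, Fin.cons_succ, Finset.prod_const, Finset.card_univ,
    Fintype.card_fin]

section Frobenius

variable {K : Type*} [Field K] [Fintype K] {Q : ℕ} (hK : Fintype.card K = Q ^ 2)
  {φ : K →+* K} (hφ : ∀ x, φ x = x ^ Q)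
include hK

lemma two_le_of_card_eq_sq : 2 ≤ Q := by
  have := Fintype.one_lt_card (α := K)
  rw [hK] at this
  by_contra! h
  interval_cases Q <;> simp at this

lemma card_units_of_card_eq_sq : Nat.card Kˣ = (Q - 1) * (Q + 1) := by
  rw [Nat.card_units, Nat.card_eq_fintype_card, hK]
  simpa [mul_comm] using Nat.sq_sub_sq Q 1

lemma ker_pow_sub_one_eq_range_pow_add_one :
    (powMonoidHom (Q - 1) : Kˣ →* Kˣ).ker = (powMonoidHom (Q + 1)).range :=
  IsCyclic.ker_powMonoidHom_eq_range (card_units_of_card_eq_sq hK)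

include hφ

lemma frob_involutive : Function.Involutive φ := fun x => by
  rw [hφ, hφ, ← pow_mul, ← sq, ← hK, FiniteField.pow_card]

lemma frob_eq_self_iff_pow_eq_one {x : K} (hx : x ≠ 0) : φ x = x ↔ x ^ (Q - 1) = 1 := by
  have hQ := two_le_of_card_eq_sq hK
  rw [hφ, ← Nat.sub_add_cancel (one_le_two.trans hQ), pow_succ, Nat.add_sub_cancel]
  exact mul_eq_right₀ hx

lemma exists_mul_frob_eq {r : K} (hr : φ r = r) (hr0 : r ≠ 0) : ∃ a, a * φ a = r := by
  have hker : Units.mk0 r hr0 ∈ (powMonoidHom (Q - 1) : Kˣ →* Kˣ).ker := by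
    rw [MonoidHom.mem_ker, powMonoidHom_apply, ← Units.val_eq_one, Units.val_pow_eq_pow_val,
      Units.val_mk0, ← frob_eq_self_iff_pow_eq_one hK hφ hr0, hr]
  obtain ⟨a, ha⟩ := ker_pow_sub_one_eq_range_pow_add_one hK ▸ hker
  refine ⟨a, ?_⟩
  rw [hφ, ← pow_succ', ← Units.val_pow_eq_pow_val, ← powMonoidHom_apply, ha, Units.val_mk0]

lemma card_frob_fixed_ne_zero : Nat.card {x : K // x ≠ 0 ∧ φ x = x} = Q - 1 := by
  have e : (powMonoidHom (Q - 1) : Kˣ →* Kˣ).ker ≃ {x : K // x ≠ 0 ∧ φ x = x} :=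
    { toFun u := ⟨u.1, u.1.ne_zero, (frob_eq_self_iff_pow_eq_one hK hφ u.1.ne_zero).2 <| by
        rw [← Units.val_pow_eq_pow_val, ← powMonoidHom_apply, u.2, Units.val_one]⟩
      invFun x := ⟨Units.mk0 x.1 x.2.1, by
        rw [MonoidHom.mem_ker, powMonoidHom_apply, ← Units.val_eq_one, Units.val_pow_eq_pow_val,
          Units.val_mk0, ← frob_eq_self_iff_pow_eq_one hK hφ x.2.1, x.2.2]⟩
      left_inv _ := by ext; rfl
      right_inv _ := rfl }
  rw [← Nat.card_congr e, IsCyclic.card_powMonoidHom_ker, card_units_of_card_eq_sq hK,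
    Nat.gcd_mul_right_left]

lemma card_frob_fixed : Nat.card {x : K // φ x = x} = Q := by
  classical
  have hQ := two_le_of_card_eq_sq hK
  have h := card_frob_fixed_ne_zero hK hφ
  simp only [Nat.card_eq_fintype_card, Fintype.card_subtype] at h ⊢
  have herase : ({x | x ≠ 0 ∧ φ x = x} : Finset K) = ({x | φ x = x} : Finset K).erase 0 := by
    ext x; simp
  rw [herase, Finset.card_erase_of_mem (by simp)] at h
  omega

lemma exists_add_frob_eq_one : ∃ θ, θ + φ θ = 1 := by
  classical
  have hQ := two_le_of_card_eq_sq hK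
  obtain ⟨y, hy⟩ : ∃ y, y + φ y ≠ 0 := by
    -- otherwise all `Q ^ 2` elements of `K` are roots of `X ^ Q + X`
    by_contra! h
    have hp : (X ^ Q + X : K[X]) ≠ 0 := by
      intro h0
      have := congrArg natDegree h0
      rw [natDegree_add_eq_left_of_natDegree_lt (by simp; omega), natDegree_X_pow] at this
      simp at this; omega
    have := card_le_degree_of_subset_roots (p := X ^ Q + X) (Z := Finset.univ) (by
      intro x _
      rw [mem_roots hp, IsRoot, eval_add, eval_pow, eval_X, add_comm, ← hφ]
      exact h x)
    rw [Finset.card_univ, hK, natDegree_add_eq_left_of_natDegree_lt (by simp; omega),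
      natDegree_X_pow] at this
    nlinarith
  refine ⟨y / (y + φ y), ?_⟩
  rw [map_div₀, map_add, frob_involutive hK hφ, add_comm (φ y) y, ← add_div, div_self hy]

end Frobenius

section Norm

variable {A : Type*} [CommRing A] (σ : A →+* A)

def unitsNorm : Aˣ →* Aˣ where
  toFun u := u * Units.map σ u
  map_one' := by simp
  map_mul' u v := by rw [map_mul, mul_mul_mul_comm]

@[simp]
lemma val_unitsNorm (u : Aˣ) : (unitsNorm σ u : A) = u * σ u := rfl

lemma mem_ker_unitsNorm {u : Aˣ} : u ∈ (unitsNorm σ).ker ↔ (u : A) * σ u = 1 := Units.ext_iff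

def fixedUnits : Subgroup Aˣ := (Units.map (σ : A →* A)).eqLocus (MonoidHom.id Aˣ)

lemma mem_fixedUnits {u : Aˣ} : u ∈ fixedUnits σ ↔ σ u = u := Units.ext_iff

variable {σ}

lemma unitsNorm_mem_fixedUnits (hσ : Function.Involutive σ) (u : Aˣ) :
    unitsNorm σ u ∈ fixedUnits σ := by
  rw [mem_fixedUnits, val_unitsNorm, map_mul, hσ, mul_comm]

lemma Units.dvd_val_mul_inv_sub_one {r w : Aˣ} {x : A} (h : x ∣ r - w) :
    x ∣ ↑(r * w⁻¹) - 1 := by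
  have : (↑(r * w⁻¹) : A) - 1 = (r - w) * ↑w⁻¹ := by
    rw [Units.val_mul, sub_mul, Units.mul_inv]
  exact this ▸ h.mul_right _

variable {t θ : A} (hσt : σ t = t) (hθ : θ + σ θ = 1)
include hσt hθ

lemma exists_pow_succ_dvd_sub_unitsNorm (ht : IsNilpotent t) {r : Aˣ} (hr : r ∈ fixedUnits σ)
    {k : ℕ} (hk : 1 ≤ k) (hrk : t ^ k ∣ r - 1) : ∃ v : Aˣ, t ^ (k + 1) ∣ r - unitsNorm σ v := by
  set δ := θ * (r - 1)
  have hδ : δ + σ δ = r - 1 := by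
    rw [map_mul, map_sub, (mem_fixedUnits σ).1 hr, map_one, ← add_mul, hθ, one_mul]
  have htδ : t ^ k ∣ δ := hrk.mul_left θ
  have htσδ : t ^ k ∣ σ δ := by
    obtain ⟨w, hw⟩ := htδ
    exact ⟨σ w, by rw [hw, map_mul, map_pow, hσt]⟩
  have hδu : IsUnit (1 + δ) := by
    obtain ⟨w, hw⟩ := (dvd_pow_self t (by omega : k ≠ 0)).trans htδ
    exact (hw ▸ (Commute.all t w).isNilpotent_mul_right ht).isUnit_one_add
  refine ⟨hδu.unit, ?_⟩
  have hsub : (r : A) - unitsNorm σ hδu.unit = -(δ * σ δ) := by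
    rw [val_unitsNorm, IsUnit.unit_spec, map_add, map_one]
    linear_combination -hδ
  rw [hsub, dvd_neg]
  exact (pow_dvd_pow t (by omega)).trans (pow_add t k k ▸ mul_dvd_mul htδ htσδ)

lemma mem_range_unitsNorm_of_dvd_sub (hσ : Function.Involutive σ) {m : ℕ} (ht : t ^ m = 0)
    {k : ℕ} (hk : 1 ≤ k) {r : Aˣ} (hr : r ∈ fixedUnits σ) (c : Aˣ)
    (hrc : t ^ k ∣ r - unitsNorm σ c) : r ∈ (unitsNorm σ).range := by
  obtain ⟨n, hn⟩ : ∃ n, m ≤ k + n := ⟨m, by omega⟩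
  induction n generalizing k r c with
  | zero =>
    rw [pow_eq_zero_of_le (by omega) ht, zero_dvd_iff, sub_eq_zero, Units.val_inj] at hrc
    exact hrc ▸ MonoidHom.mem_range.2 ⟨c, rfl⟩
  | succ n ih =>
    have hr' := mul_mem hr (inv_mem (unitsNorm_mem_fixedUnits hσ c))
    obtain ⟨v, hv⟩ := exists_pow_succ_dvd_sub_unitsNorm hσt hθ ⟨m, ht⟩ hr' hk
      (Units.dvd_val_mul_inv_sub_one hrc)
    simpa using mul_mem (ih (by omega) hr' v hv (by omega)) (MonoidHom.mem_range.2 ⟨c, rfl⟩)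

theorem range_unitsNorm_eq_fixedUnits (hσ : Function.Involutive σ) {m : ℕ} (ht : t ^ m = 0)
    (hres : ∀ r ∈ fixedUnits σ, ∃ c : Aˣ, t ∣ r - unitsNorm σ c) :
    (unitsNorm σ).range = fixedUnits σ := by
  refine le_antisymm ?_ fun r hr => ?_
  · rintro _ ⟨u, rfl⟩
    exact unitsNorm_mem_fixedUnits hσ u
  obtain ⟨c, hc⟩ := hres r hr
  exact mem_range_unitsNorm_of_dvd_sub hσt hθ hσ ht le_rfl hr c (by rwa [pow_one])

end Norm

namespace TruncPoly

variable {K : Type*} [Field K] {m : ℕ}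

variable (K m) in
noncomputable abbrev mk : K[X] →+* TruncPoly K m := Ideal.Quotient.mk _

lemma mk_surjective : Function.Surjective (mk K m) := Ideal.Quotient.mk_surjective

lemma mk_X_pow_eq_zero : mk K m X ^ m = 0 := by
  rw [← map_pow, Ideal.Quotient.eq_zero_iff_mem]
  exact Ideal.subset_span rfl

variable (K m) in
noncomputable def coeffEquiv : TruncPoly K m ≃ (Fin m → K) :=
  (AdjoinRoot.powerBasisAux' (monic_X_pow m)).equivFun.toEquiv.trans
    (Equiv.arrowCongr (finCongr (natDegree_X_pow m)) (Equiv.refl K))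

lemma coeffEquiv_mk (f : K[X]) (i : Fin m) : coeffEquiv K m (mk K m f) i = (f %ₘ X ^ m).coeff i :=
  rfl

lemma mk_modByMonic (f : K[X]) : mk K m (f %ₘ X ^ m) = mk K m f :=
  AdjoinRoot.mk_leftInverse (monic_X_pow m) (mk K m f)

lemma isNilpotent_of_mk_X_dvd {z : TruncPoly K m} (hz : mk K m X ∣ z) : IsNilpotent z := by
  obtain ⟨w, rfl⟩ := hz
  exact (Commute.all _ _).isNilpotent_mul_right ⟨m, mk_X_pow_eq_zero⟩

section ConstCoeff

variable [NeZero m]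

variable (K m) in
noncomputable def constCoeff : TruncPoly K m →+* K :=
  Ideal.Quotient.lift _ constantCoeff fun f hf => by
    obtain ⟨g, rfl⟩ := Ideal.mem_span_singleton'.1 hf
    simp [(NeZero.ne m).symm]

lemma constCoeff_mk (f : K[X]) : constCoeff K m (mk K m f) = f.coeff 0 := rfl

lemma coeffEquiv_zero (z : TruncPoly K m) : coeffEquiv K m z 0 = constCoeff K m z := by
  obtain ⟨f, rfl⟩ := mk_surjective z
  rw [coeffEquiv_mk, ← mk_modByMonic, constCoeff_mk]
  rfl

lemma mk_X_dvd_of_constCoeff_eq_zero {z : TruncPoly K m} (hz : constCoeff K m z = 0) :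
    mk K m X ∣ z := by
  obtain ⟨f, rfl⟩ := mk_surjective z
  exact map_dvd _ (X_dvd_iff.2 hz)

lemma isUnit_iff_constCoeff_ne_zero {z : TruncPoly K m} : IsUnit z ↔ constCoeff K m z ≠ 0 := by
  refine ⟨fun hz => (hz.map (constCoeff K m)).ne_zero, fun hz => ?_⟩
  have hc : IsUnit (mk K m (C (constCoeff K m z))) := (IsUnit.mk0 _ hz).map ((mk K m).comp C)
  have hn : IsNilpotent (z - mk K m (C (constCoeff K m z))) :=
    isNilpotent_of_mk_X_dvd (mk_X_dvd_of_constCoeff_eq_zero (by simp [constCoeff_mk]))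
  simpa using hn.isUnit_add_left_of_commute hc (Commute.all _ _)

end ConstCoeff

section Conjugation

variable {φ : K →+* K} {σ : TruncPoly K m →+* TruncPoly K m}
  (hσ : ∀ f, σ (mk K m f) = mk K m (f.map φ))
include hσ

lemma coeffEquiv_map (z : TruncPoly K m) (i : Fin m) :
    coeffEquiv K m (σ z) i = φ (coeffEquiv K m z i) := by
  obtain ⟨f, rfl⟩ := mk_surjective z
  rw [hσ, coeffEquiv_mk, coeffEquiv_mk, ← coeff_map, map_modByMonic _ (monic_X_pow m),
    Polynomial.map_pow, map_X]

lemma constCoeff_map [NeZero m] (z : TruncPoly K m) :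
    constCoeff K m (σ z) = φ (constCoeff K m z) := by
  rw [← coeffEquiv_zero, coeffEquiv_map hσ, coeffEquiv_zero]

lemma map_mk_X : σ (mk K m X) = mk K m X := by rw [hσ, map_X]

lemma map_mk_C (a : K) : σ (mk K m (C a)) = mk K m (C (φ a)) := by rw [hσ, map_C]

lemma involutive_of_map_involutive (hφ : Function.Involutive φ) : Function.Involutive σ := by
  intro z
  obtain ⟨f, rfl⟩ := mk_surjective z
  rw [hσ, hσ, map_map, show φ.comp φ = RingHom.id K from RingHom.ext hφ, map_id]

lemma mem_fixedUnits_iff {u : (TruncPoly K m)ˣ} :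
    u ∈ fixedUnits σ ↔ ∀ i, φ (coeffEquiv K m u i) = coeffEquiv K m u i := by
  rw [mem_fixedUnits, ← (coeffEquiv K m).apply_eq_iff_eq, funext_iff]
  simp only [coeffEquiv_map hσ]

end Conjugation

section Finite

variable [Fintype K]

lemma card_units_forall_coeff (n : ℕ) (p : K → Prop) :
    Nat.card {u : (TruncPoly K (n + 1))ˣ // ∀ i, p (coeffEquiv K (n + 1) u i)}
      = Nat.card {x : K // x ≠ 0 ∧ p x} * Nat.card {x // p x} ^ n := by
  rw [Nat.card_units_subtype (fun z : TruncPoly K (n + 1) => ∀ i, p (coeffEquiv K (n + 1) z i)),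
    ← Nat.card_fin_succ_pi_subtype]
  refine Nat.card_congr ((coeffEquiv K (n + 1)).subtypeEquiv fun z => ?_)
  rw [isUnit_iff_constCoeff_ne_zero, ← coeffEquiv_zero]

variable {Q : ℕ} (hK : Fintype.card K = Q ^ 2)
include hK

lemma card_units (n : ℕ) :
    Nat.card (TruncPoly K (n + 1))ˣ = (Q - 1) * (Q + 1) * (Q ^ 2) ^ n := by
  have h := card_units_forall_coeff (K := K) n fun _ => True
  simp only [and_true, forall_const] at h
  rw [Nat.card_congr (Equiv.subtypeUnivEquiv fun _ => trivial), Nat.card_congr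
    (Equiv.subtypeUnivEquiv fun _ => trivial), Nat.card_eq_fintype_card (α := K), hK,
    ← Nat.card_congr unitsEquivNeZero, card_units_of_card_eq_sq hK] at h
  exact h

variable {φ : K →+* K} (hφ : ∀ x, φ x = x ^ Q)
include hφ

lemma card_fixedUnits {n : ℕ} {σ : TruncPoly K (n + 1) →+* TruncPoly K (n + 1)}
    (hσ : ∀ f, σ (mk K (n + 1) f) = mk K (n + 1) (f.map φ)) :
    Nat.card (fixedUnits σ) = (Q - 1) * Q ^ n := by
  rw [← card_frob_fixed_ne_zero hK hφ, ← card_frob_fixed hK hφ, ← card_units_forall_coeff]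
  exact Nat.card_congr (Equiv.subtypeEquivRight fun u => mem_fixedUnits_iff hσ)

variable {σ : TruncPoly K m →+* TruncPoly K m} (hσ : ∀ f, σ (mk K m f) = mk K m (f.map φ))
include hσ

lemma exists_mk_X_dvd_sub_unitsNorm [NeZero m] {r : (TruncPoly K m)ˣ} (hr : r ∈ fixedUnits σ) :
    ∃ c : (TruncPoly K m)ˣ, mk K m X ∣ r - unitsNorm σ c := by
  have hr0 : constCoeff K m r ≠ 0 := isUnit_iff_constCoeff_ne_zero.1 r.isUnit
  have hrφ : φ (constCoeff K m r) = constCoeff K m r := by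
    rw [← constCoeff_map hσ, (mem_fixedUnits σ).1 hr]
  obtain ⟨a, ha⟩ := exists_mul_frob_eq hK hφ hrφ hr0
  have hc : IsUnit (mk K m (C a)) :=
    (IsUnit.mk0 a (left_ne_zero_of_mul (ha ▸ hr0))).map ((mk K m).comp C)
  refine ⟨hc.unit, mk_X_dvd_of_constCoeff_eq_zero ?_⟩
  rw [val_unitsNorm, IsUnit.unit_spec, map_sub, map_mul, constCoeff_map hσ, constCoeff_mk,
    coeff_C_zero, ha, sub_self]

theorem range_unitsNorm [NeZero m] : (unitsNorm σ).range = fixedUnits σ := by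
  obtain ⟨θ, hθ⟩ := exists_add_frob_eq_one hK hφ
  refine range_unitsNorm_eq_fixedUnits (t := mk K m X) (θ := mk K m (C θ)) (map_mk_X hσ) ?_
    (involutive_of_map_involutive hσ (frob_involutive hK hφ)) mk_X_pow_eq_zero
    fun r hr => exists_mk_X_dvd_sub_unitsNorm hK hφ hσ hr
  rw [map_mk_C hσ, ← map_add, ← C_add, hθ, C_1, map_one]

end Finite

end TruncPoly

open TruncPoly in
theorem stmt_14_general (q d m : ℕ) (hm : 0 < m)
    (K' : Type*) [Field K'] [Fintype K'] (hK' : Fintype.card K' = (q ^ d) ^ 2)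
    (σ₀ : K' →+* K') (hσ₀ : ∀ x, σ₀ x = x ^ (q ^ d))
    (σ : TruncPoly K' m →+* TruncPoly K' m)
    (hσ : σ.comp (Ideal.Quotient.mk (Ideal.span {(Polynomial.X : Polynomial K') ^ m}))
      = (Ideal.Quotient.mk (Ideal.span {(Polynomial.X : Polynomial K') ^ m})).comp
          (Polynomial.mapRingHom σ₀)) :
    (∀ r : (TruncPoly K' m)ˣ, σ ↑r = ↑r → ∃ u : (TruncPoly K' m)ˣ, (u : TruncPoly K' m) * σ ↑u = ↑r) ∧
    Nat.card {u : (TruncPoly K' m)ˣ // (u : TruncPoly K' m) * σ ↑u = 1}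
      = (q ^ d + 1) * (q ^ d) ^ (m - 1) := by
  obtain ⟨n, rfl⟩ : ∃ n, m = n + 1 := ⟨m - 1, by omega⟩
  have hσ' (f : K'[X]) : σ (mk K' (n + 1) f) = mk K' (n + 1) (f.map σ₀) :=
    RingHom.congr_fun hσ f
  have hrange := range_unitsNorm hK' hσ₀ hσ'
  refine ⟨fun r hr => ?_, ?_⟩
  · obtain ⟨u, hu⟩ := hrange.ge ((mem_fixedUnits σ).2 hr)
    exact ⟨u, congrArg Units.val hu⟩
  have hcard := (unitsNorm σ).ker.card_mul_index
  rw [Subgroup.index_ker, hrange, card_fixedUnits hK' hσ₀ hσ', card_units hK'] at hcard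
  have hQ := two_le_of_card_eq_sq hK'
  have hpos : 0 < (q ^ d - 1) * (q ^ d) ^ n := Nat.mul_pos (by omega) (pow_pos (by omega) n)
  rw [Nat.add_sub_cancel,
    ← Nat.card_congr (Equiv.subtypeEquivRight fun u => (mem_ker_unitsNorm σ (u := u)))]
  refine Nat.eq_of_mul_eq_mul_right hpos ?_
  rw [hcard]
  ring

/-- Let `q` be a prime power, `d, m ≥ 1`, `R = 𝔽_{q^d}[t]/(t^m)` and `R' = 𝔽_{q^{2d}}[t]/(t^m)`,
with `σ : R' → R'` acting on coefficients by `x ↦ x^(q^d)` and fixing `t` (so that `R` is the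
fixed ring of `σ`).  Then the norm map `N(u) = u·σ(u)` is surjective from `(R')ˣ` onto `Rˣ`
(i.e. onto the `σ`-fixed units), and its kernel has cardinality `(q^d + 1)·q^(d(m−1))`. -/
theorem stmt_14 (q d m : ℕ) (hq : ∃ p k, p.Prime ∧ 0 < k ∧ q = p ^ k)
    (hd : 0 < d) (hm : 0 < m)
    (K' : Type*) [Field K'] [Fintype K'] (hK' : Fintype.card K' = (q ^ d) ^ 2)
    (σ₀ : K' →+* K') (hσ₀ : ∀ x, σ₀ x = x ^ (q ^ d))
    (σ : TruncPoly K' m →+* TruncPoly K' m)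
    (hσ : σ.comp (Ideal.Quotient.mk (Ideal.span {(Polynomial.X : Polynomial K') ^ m}))
      = (Ideal.Quotient.mk (Ideal.span {(Polynomial.X : Polynomial K') ^ m})).comp
          (Polynomial.mapRingHom σ₀)) :
    (∀ r : (TruncPoly K' m)ˣ, σ ↑r = ↑r → ∃ u : (TruncPoly K' m)ˣ, (u : TruncPoly K' m) * σ ↑u = ↑r) ∧
    Nat.card {u : (TruncPoly K' m)ˣ // (u : TruncPoly K' m) * σ ↑u = 1}
      = (q ^ d + 1) * (q ^ d) ^ (m - 1) :=
  stmt_14_general q d m hm K' hK' σ₀ hσ₀ σ hσ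
end

section
/- Let k be a field with an automorphism σ satisfying σ² = id, let ε ∈ {±1}, and let J ∈ M_n(k) be the full nilpotent Jordan block (ones on the superdiagonal). Suppose h ∈ GL_n(k) satisfies σ(ᵗh) = ε·h and h·J + σ(ᵗJ)·h = 0. Then: (a) h_{i,j} = 0 whenever i + j ≤ n; (b) the antidiagonal entries satisfy h_{k+1, n−k} = (−1)^k·c for all 0 ≤ k ≤ n−1, where c := h_{1,n} ∈ k^× and c + (−1)^n ε σ(c) = 0; (c) more generally h_{k+l, n−k} = (−1)^k ε σ(h_{n,l}) for 1 ≤ l ≤ n−k. -/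
open Matrix

/-!
Entrywise, `h * J + Jᵀ * h = 0` says `h (i+1) j = -h i (j+1)` and, since the first row of `Jᵀ * h`
vanishes, `h 0 j = 0` for `j < n - 1`. So the entries of `h` alternate in sign along each
antidiagonal, which gives the vanishing above the antidiagonal and the antidiagonal formula;
the first row of the invertible `h` then has its only possibly nonzero entry in the corner `c`.
The `ε`-hermitian symmetry moves entries across the antidiagonal: applied to `c` and to
`h (n-1) 0 = (-1)^(n-1) c` it gives the relation on `c`, and applied to the last row it gives (c).
-/

def nilpotentJordanBlock (R : Type*) [Zero R] [One R] (n : ℕ) : Matrix (Fin n) (Fin n) R :=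
  Matrix.of fun i j => if (i : ℕ) + 1 = j then 1 else 0

namespace nilpotentJordanBlock

section Semiring

variable {R : Type*} [NonAssocSemiring R] {n : ℕ}

theorem map_ringHom {S : Type*} [NonAssocSemiring S] (f : R →+* S) :
    (nilpotentJordanBlock R n).map f = nilpotentJordanBlock S n := by
  ext i j
  simp [nilpotentJordanBlock, apply_ite f]

theorem mul_apply_of_val_eq_succ (A : Matrix (Fin n) (Fin n) R) (i : Fin n) {j j₀ : Fin n}
    (hj : (j : ℕ) = j₀ + 1) : (A * nilpotentJordanBlock R n) i j = A i j₀ := by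
  rw [Matrix.mul_apply, Finset.sum_eq_single j₀]
  · simp [nilpotentJordanBlock, hj]
  · intro m _ hm
    simp [nilpotentJordanBlock, hj, Fin.val_ne_of_ne hm]
  · simp

theorem transpose_mul_apply_of_val_eq_succ (A : Matrix (Fin n) (Fin n) R) {i i₀ : Fin n}
    (hi : (i : ℕ) = i₀ + 1) (j : Fin n) : ((nilpotentJordanBlock R n)ᵀ * A) i j = A i₀ j := by
  rw [Matrix.mul_apply, Finset.sum_eq_single i₀]
  · simp [nilpotentJordanBlock, hi]
  · intro m _ hm
    simp [nilpotentJordanBlock, hi, Fin.val_ne_of_ne hm]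
  · simp

theorem transpose_mul_apply_of_val_eq_zero (A : Matrix (Fin n) (Fin n) R) {i : Fin n}
    (hi : (i : ℕ) = 0) (j : Fin n) : ((nilpotentJordanBlock R n)ᵀ * A) i j = 0 := by
  simp [Matrix.mul_apply, nilpotentJordanBlock, hi]

end Semiring

section Ring

variable {R : Type*} [Ring R] {n : ℕ} {h : Matrix (Fin n) (Fin n) R}

theorem apply_eq_neg_of_skew
    (hh : h * nilpotentJordanBlock R n + (nilpotentJordanBlock R n)ᵀ * h = 0)
    {i j i₀ j₀ : Fin n} (hi : (i : ℕ) = i₀ + 1) (hj : (j₀ : ℕ) = j + 1) : h i j = -h i₀ j₀ := by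
  have := congrFun (congrFun hh i) j₀
  rw [Matrix.add_apply, mul_apply_of_val_eq_succ h i hj,
    transpose_mul_apply_of_val_eq_succ h hi] at this
  exact eq_neg_of_add_eq_zero_left this

theorem apply_eq_zero_of_skew_of_val_eq_zero
    (hh : h * nilpotentJordanBlock R n + (nilpotentJordanBlock R n)ᵀ * h = 0)
    {i j : Fin n} (hi : (i : ℕ) = 0) (hj : (j : ℕ) + 1 < n) : h i j = 0 := by
  have := congrFun (congrFun hh i) ⟨j + 1, hj⟩
  rwa [Matrix.add_apply, mul_apply_of_val_eq_succ h i rfl,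
    transpose_mul_apply_of_val_eq_zero h hi, add_zero] at this

theorem apply_eq_neg_one_pow_mul_of_skew
    (hh : h * nilpotentJordanBlock R n + (nilpotentJordanBlock R n)ᵀ * h = 0)
    {i j i' j' : Fin n} {d : ℕ} (hi : (i : ℕ) = i' + d) (hsum : (i : ℕ) + j = i' + j') :
    h i j = (-1) ^ d * h i' j' := by
  induction d generalizing i j with
  | zero =>
    obtain rfl : i = i' := Fin.ext hi
    obtain rfl : j = j' := Fin.ext (by omega)
    simp
  | succ d ih =>
    rw [apply_eq_neg_of_skew hh (i₀ := ⟨i' + d, by omega⟩) (j₀ := ⟨j + 1, by omega⟩)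
      (by simp; omega) rfl, ih rfl (by simp; omega), pow_succ, mul_neg_one, neg_mul]

theorem apply_eq_zero_of_skew_of_add_lt
    (hh : h * nilpotentJordanBlock R n + (nilpotentJordanBlock R n)ᵀ * h = 0)
    {i j : Fin n} (hij : (i : ℕ) + j + 1 < n) : h i j = 0 := by
  rw [apply_eq_neg_one_pow_mul_of_skew hh (i' := ⟨0, by omega⟩) (j' := ⟨i + j, by omega⟩)
    (d := i) (by simp) (by simp), apply_eq_zero_of_skew_of_val_eq_zero hh rfl hij, mul_zero]

end Ring

theorem apply_ne_zero_of_skew_of_isUnit {R : Type*} [CommRing R] [Nontrivial R] {n : ℕ}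
    {h : Matrix (Fin n) (Fin n) R}
    (hh : h * nilpotentJordanBlock R n + (nilpotentJordanBlock R n)ᵀ * h = 0) (hinv : IsUnit h)
    {i j : Fin n} (hi : (i : ℕ) = 0) (hj : (j : ℕ) = n - 1) : h i j ≠ 0 := by
  intro hzero
  refine ((Matrix.isUnit_iff_isUnit_det h).mp hinv).ne_zero
    (Matrix.det_eq_zero_of_row_eq_zero i ?_)
  intro m
  rcases eq_or_ne m j with rfl | hm
  · exact hzero
  · exact apply_eq_zero_of_skew_of_val_eq_zero hh hi (by have := Fin.val_ne_of_ne hm; omega)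

end nilpotentJordanBlock

open nilpotentJordanBlock in
/-- Let `k` be a field with an involution `σ`, `ε = ±1`, and `J ∈ M_n(k)` the full nilpotent
Jordan block.  If `h ∈ GL_n(k)` is `ε`-hermitian (`σ(ᵗh) = ε h`) and satisfies
`h·J + σ(ᵗJ)·h = 0`, then:
(a) `h i j = 0` whenever `(i+1) + (j+1) ≤ n` (1-indexed: `i + j ≤ n`);
with `c := h 0 (n-1)` a unit satisfying `c + (−1)^n ε σ(c) = 0`,
(b) the antidiagonal entries satisfy `h k (n-1-k) = (−1)^k c`;
(c) more generally `h (k+l-1) (n-1-k) = (−1)^k ε σ (h (n-1) (l-1))` for `1 ≤ l ≤ n − k`. -/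
theorem stmt_17 (k : Type*) [Field k] (σ : k →+* k)
    (ε : k) (hε : ε = 1 ∨ ε = -1)
    (n : ℕ) (hn : 0 < n)
    (J : Matrix (Fin n) (Fin n) k)
    (hJ : J = Matrix.of fun i j : Fin n => if (i : ℕ) + 1 = (j : ℕ) then 1 else 0)
    (h : Matrix (Fin n) (Fin n) k) (hinv : IsUnit h)
    (hherm : ∀ i j, σ (h j i) = ε * h i j)
    (heq : h * J + (J.transpose.map σ) * h = 0) :
    (∀ i j : Fin n, (i : ℕ) + 1 + ((j : ℕ) + 1) ≤ n → h i j = 0) ∧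
    IsUnit (h ⟨0, hn⟩ ⟨n - 1, by omega⟩) ∧
    (h ⟨0, hn⟩ ⟨n - 1, by omega⟩ + (-1) ^ n * ε * σ (h ⟨0, hn⟩ ⟨n - 1, by omega⟩) = 0) ∧
    (∀ i : Fin n, h i i.rev = (-1) ^ (i : ℕ) * h ⟨0, hn⟩ ⟨n - 1, by omega⟩) ∧
    (∀ (K l : ℕ) (_hK : K ≤ n - 1) (_hl : 1 ≤ l) (_hln : l ≤ n - K),
      h ⟨K + l - 1, by omega⟩ ⟨n - 1 - K, by omega⟩
        = (-1) ^ K * ε * σ (h ⟨n - 1, by omega⟩ ⟨l - 1, by omega⟩)) := by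
  have hh : h * nilpotentJordanBlock k n + (nilpotentJordanBlock k n)ᵀ * h = 0 := by
    have hJ' : J = nilpotentJordanBlock k n := hJ
    rwa [hJ', transpose_map, map_ringHom] at heq
  have hεε : ε * ε = 1 := by rcases hε with rfl | rfl <;> norm_num
  have hcorner : h ⟨n - 1, by omega⟩ ⟨0, hn⟩ = (-1) ^ (n - 1) * h ⟨0, hn⟩ ⟨n - 1, by omega⟩ :=
    apply_eq_neg_one_pow_mul_of_skew hh (by simp) (by simp)
  have hsign : (-1 : k) ^ n = -(-1) ^ (n - 1) := by
    conv_lhs => rw [← Nat.sub_add_cancel hn]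
    rw [pow_succ, mul_neg_one]
  have hsq : (-1 : k) ^ (n - 1) * (-1) ^ (n - 1) = 1 := by
    rw [← mul_pow, neg_one_mul, neg_neg, one_pow]
  refine ⟨fun i j hij => apply_eq_zero_of_skew_of_add_lt hh (by omega),
    isUnit_iff_ne_zero.mpr (apply_ne_zero_of_skew_of_isUnit hh hinv rfl rfl), ?_,
    fun i => apply_eq_neg_one_pow_mul_of_skew hh (by simp) (by simp; omega),
    fun K l hK hl hln => ?_⟩
  · rw [hherm, hcorner, hsign]
    linear_combination (-(-1) ^ (n - 1) * (-1) ^ (n - 1) * h ⟨0, hn⟩ ⟨n - 1, by omega⟩) * hεε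
      - h ⟨0, hn⟩ ⟨n - 1, by omega⟩ * hsq
  · rw [hherm, apply_eq_neg_one_pow_mul_of_skew hh (i' := ⟨l - 1, by omega⟩)
      (j' := ⟨n - 1, by omega⟩) (d := K) (by simp; omega) (by simp; omega)]
    linear_combination (-(-1) ^ K * h ⟨l - 1, by omega⟩ ⟨n - 1, by omega⟩) * hεε
end
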